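/- arXiv:2001.02827 — 5 statements merged into one kernel-verified Lean document; each statement's English description precedes it below -/
import Mathlib

section
/- Let (X, Π) be a weighted pure d-dimensional simplicial complex that is a γ-local-spectral expander, and let 0 ≤ a < b ≤ d−1. Then λ₂(U_{a,b}) ≤ (1 + γ)^{b−a} · (a+1)/(b+1). In particular, if γ ≤ ε/(b−a) for some 0 ≤ ε ≤ 1, then λ₂(U_{a,b}) ≤ e^ε · (a+1)/(b+1). -/
/-
Since `D` is the adjoint of `U`, the Rayleigh quotient of `U_{a,b}` at `f` is
`‖U_{b-1} ⋯ U_a f‖² / ‖f‖²`, so it suffices that every up step contracts functions orthogonal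
to the constants: `(m + 1) ‖U g‖² ≤ (1 + γ) m ‖g‖²` for `g ⊥ 1` on faces of cardinality `m`.
The factors telescope to `(1 + γ)^(b-a) (a + 1)/(b + 1)`, and `(1 + γ)^t ≤ e^(tγ) ≤ e^ε` gives
the second bound.

The contraction is proved by induction on `m`. Garland's decomposition writes `(m + 2) ‖U g‖²`
as `‖g‖²` plus `m + 1` times the `Π`-average over faces `σ` of cardinality `m` of the link forms
`⟨g_σ, M_σ g_σ⟩`, where `g_σ(x) = g(σ ∪ {x})`. Splitting `g_σ` into its mean `(D g)(σ)` and a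
part orthogonal to the constants, the bound `λ₂(M_σ) ≤ γ` gives
`(m + 2) ‖U g‖² ≤ ‖g‖² + (m + 1) (‖D g‖² + γ (‖g‖² - ‖D g‖²))`, and `‖D g‖² = ⟨U D g, g⟩` is
controlled by the induction hypothesis through Cauchy–Schwarz. The expansion hypothesis at the
empty face also forces `γ ≥ -1`, which keeps the factors `1 + γ` nonnegative.
-/

open Finset

/-- A weighted pure `d`-dimensional simplicial complex on a finite ground set `V`.
Faces are finsets; a face of cardinality `m` has dimension `m - 1` (so `X(j)` is the
set of faces of cardinality `j + 1`).  The family of faces is downward closed, every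
face is contained in a face of cardinality `d + 1` (purity), and a probability
distribution `Π = Π_d` (positive weights summing to `1`) is given on the
top-dimensional faces. -/
structure WSC (V : Type*) [DecidableEq V] [Fintype V] (d : ℕ) where
  faces : Finset (Finset V)
  empty_mem : ∅ ∈ faces
  down_closed : ∀ β ∈ faces, ∀ α ⊆ β, α ∈ faces
  pure : ∀ α ∈ faces, ∃ β ∈ faces, α ⊆ β ∧ β.card = d + 1
  dim_le : ∀ α ∈ faces, α.card ≤ d + 1
  weight : Finset V → ℝ
  weight_pos : ∀ β ∈ faces, β.card = d + 1 → 0 < weight β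
  weight_zero : ∀ β : Finset V, β ∉ faces ∨ β.card ≠ d + 1 → weight β = 0
  weight_sum : ∑ β ∈ faces.filter (fun β => β.card = d + 1), weight β = 1

namespace WSC

variable {V : Type*} [DecidableEq V] [Fintype V] {d : ℕ}

/-- Auxiliary recursion for the marginal distributions: `Waux X t` is the marginal
distribution `Π_{d - t}` on faces of cardinality `d + 1 - t`, defined by
`Π_j(α) = (1/(j+2)) ∑_{β ∈ X(j+1), β ⊇ α} Π_{j+1}(β)`. -/
noncomputable def Waux (X : WSC V d) : ℕ → Finset V → ℝ
  | 0 => X.weight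
  | (t + 1) => fun α =>
      (1 / ((d + 1 - t : ℕ) : ℝ)) *
        ∑ β ∈ X.faces.filter (fun β => α ⊆ β ∧ β.card = d + 1 - t), X.Waux t β

/-- `X.W m α` is the marginal probability `Π_{m-1}(α)` of the face `α` of cardinality
`m` (dimension `m - 1`). -/
noncomputable def W (X : WSC V d) (m : ℕ) : Finset V → ℝ := X.Waux (d + 1 - m)

/-- The inner product `⟨f, g⟩_{Π_{m-1}}` on `ℝ^{X(m-1)}` (faces of cardinality `m`). -/
noncomputable def inn (X : WSC V d) (m : ℕ) (f g : Finset V → ℝ) : ℝ :=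
  ∑ α ∈ X.faces.filter (fun α => α.card = m), X.W m α * f α * g α

/-- The up operator `U_j`: `(U_j f)(β) = (1/(j+2)) ∑_{x ∈ β} f(β \ {x})`, for `β` of
cardinality `j + 2`.  (The formula is uniform in the cardinality of `β`.) -/
noncomputable def upOp (f : Finset V → ℝ) : Finset V → ℝ :=
  fun β => (1 / (β.card : ℝ)) * ∑ x ∈ β, f (β.erase x)

/-- The down operator `D_{j+1}`:
`(D_{j+1} g)(α) = ∑_{β ∈ X(j+1), β ⊇ α} Π_{j+1}(β) g(β) / ((j+2) Π_j(α))`, for `α` of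
cardinality `j + 1`.  (The formula is uniform in the cardinality of `α`.) -/
noncomputable def downOp (X : WSC V d) (g : Finset V → ℝ) : Finset V → ℝ :=
  fun α => ∑ β ∈ X.faces.filter (fun β => α ⊆ β ∧ β.card = α.card + 1),
      (X.W (α.card + 1) β * g β) / (((α.card : ℝ) + 1) * X.W α.card α)

/-- The down-up walk `P∨_k = U_{k-1} D_k`, acting on functions on `X(k)` (faces of
cardinality `k + 1`). -/
noncomputable def downUp (X : WSC V d) (f : Finset V → ℝ) : Finset V → ℝ :=
  upOp (X.downOp f)

/-- The up-down walk `P∧_k = D_{k+1} U_k`, acting on functions on `X(k)` (faces of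
cardinality `k + 1`). -/
noncomputable def upDown (X : WSC V d) (f : Finset V → ℝ) : Finset V → ℝ :=
  X.downOp (upOp f)

/-- The `k`-th non-lazy up-down walk `N_k = ((k+2)/(k+1)) (P∧_k - (1/(k+2)) I)`. -/
noncomputable def nonLazy (X : WSC V d) (k : ℕ) (f : Finset V → ℝ) : Finset V → ℝ :=
  fun α => (((k : ℝ) + 2) / ((k : ℝ) + 1)) * (X.upDown f α - (1 / ((k : ℝ) + 2)) * f α)

/-- The up-down walk `U_{a,b} = D_{a+1} ⋯ D_b · U_{b-1} ⋯ U_a` on `X(a)` through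
`X(b)`, where `t = b - a`. -/
noncomputable def upDownAB (X : WSC V d) (t : ℕ) (f : Finset V → ℝ) : Finset V → ℝ :=
  (X.downOp)^[t] (upOp^[t] f)

/-- The second largest eigenvalue of a row-stochastic operator `M` on `ℝ^{X(m-1)}`
(faces of cardinality `m`) which is self-adjoint with respect to `⟨·,·⟩_{Π_{m-1}}`
and has stationary distribution `Π_{m-1}`: by the variational principle it is the
supremum of the Rayleigh quotients of (nonzero) functions orthogonal to the
constant function `1`. -/
noncomputable def lam2 (X : WSC V d) (m : ℕ) (M : (Finset V → ℝ) → Finset V → ℝ) : ℝ :=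
  sSup { r : ℝ | ∃ f : Finset V → ℝ,
    X.inn m f (fun _ => 1) = 0 ∧ X.inn m f f ≠ 0 ∧
    r = X.inn m f (M f) / X.inn m f f }

/-- The vertices of the link `X_α`: those `x ∉ α` with `α ∪ {x} ∈ X`. -/
def linkVerts (X : WSC V d) (α : Finset V) : Finset V :=
  Finset.univ.filter (fun x => x ∉ α ∧ insert x α ∈ X.faces)

/-- The link distribution `Π^α_l(τ) = Π_{j+1+l}(α ∪ τ) / (C(|α ∪ τ|, |α|) · Π_j(α))`
for a face `α` of dimension `j` and `τ ∈ X_α(l)`. -/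
noncomputable def linkPi (X : WSC V d) (α τ : Finset V) : ℝ :=
  X.W (α ∪ τ).card (α ∪ τ) / ((Nat.choose (α ∪ τ).card α.card : ℝ) * X.W α.card α)

/-- The random walk matrix `M_α` of the graph of the link `X_α`, with entries
`M_α(x, y) = Π^α_1({x, y}) / (2 Π^α_0(x))` for `{x, y} ∈ X_α(1)` and `0` otherwise,
viewed as an operator on functions on the vertices of the link. -/
noncomputable def linkWalk (X : WSC V d) (α : Finset V) (f : V → ℝ) : V → ℝ :=
  fun x => ∑ y ∈ (X.linkVerts α).filter
      (fun y => y ≠ x ∧ insert y (insert x α) ∈ X.faces),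
    (X.linkPi α {x, y} / (2 * X.linkPi α {x})) * f y

/-- The projector `J_α` onto the constant functions on the link: `J_α g` is the
constant function with value `E_{x ∼ Π^α_0}[g(x)]`. -/
noncomputable def linkJ (X : WSC V d) (α : Finset V) (g : V → ℝ) : V → ℝ :=
  fun _ => ∑ x ∈ X.linkVerts α, X.linkPi α {x} * g x

/-- The inner product `⟨g, h⟩_{Π^α_0}` on functions on the vertices of the link. -/
noncomputable def linkInner (X : WSC V d) (α : Finset V) (g h : V → ℝ) : ℝ :=
  ∑ x ∈ X.linkVerts α, X.linkPi α {x} * g x * h x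

/-- The second largest eigenvalue `λ₂(M_α)` of the random walk matrix of the graph
of the link `X_α`, via the variational principle. -/
noncomputable def linkLam2 (X : WSC V d) (α : Finset V) : ℝ :=
  sSup { r : ℝ | ∃ f : V → ℝ,
    X.linkInner α f (fun _ => 1) = 0 ∧ X.linkInner α f f ≠ 0 ∧
    r = X.linkInner α f (X.linkWalk α f) / X.linkInner α f f }

/-- `X.gammaC m` is `γ_{m-1} = max_{α ∈ X(m-1)} λ₂(M_α)`, the maximum over faces `α`
of cardinality `m` (dimension `m - 1`) of the second eigenvalue of the link walk. -/
noncomputable def gammaC (X : WSC V d) (m : ℕ) : ℝ :=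
  sSup { r : ℝ | ∃ α ∈ X.faces, α.card = m ∧ r = X.linkLam2 α }

end WSC

lemma one_add_pow_le_exp {γ ε : ℝ} {t : ℕ} (ht : t ≠ 0) (hγ1 : -1 ≤ γ) (hγ : γ ≤ ε / t) :
    (1 + γ) ^ t ≤ Real.exp ε :=
  calc (1 + γ) ^ t ≤ Real.exp γ ^ t :=
        pow_le_pow_left₀ (by linarith) (by linarith [Real.add_one_le_exp γ]) t
    _ = Real.exp (t * γ) := (Real.exp_nat_mul γ t).symm
    _ ≤ Real.exp ε := Real.exp_le_exp.2 (by rwa [le_div_iff₀' (by positivity)] at hγ)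

namespace WSC

variable {V : Type*} [DecidableEq V]

lemma upOp_one {β : Finset V} (hβ : β.Nonempty) : upOp (fun _ => (1 : ℝ)) β = 1 := by
  have := hβ.card_pos
  simp only [upOp, sum_const, nsmul_eq_mul, mul_one]
  field_simp

lemma upOp_insert (g : Finset V → ℝ) {α : Finset V} {y : V} (hy : y ∉ α) :
    upOp g (insert y α) = (g α + ∑ x ∈ α, g (insert y (α.erase x))) / (α.card + 1) := by
  have herase : ∀ x ∈ α, (insert y α).erase x = insert y (α.erase x) := fun x hx =>
    erase_insert_of_ne fun h => hy (h ▸ hx)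
  rw [upOp, card_insert_of_notMem hy, sum_insert hy, erase_insert hy,
    sum_congr rfl fun x hx => congrArg g (herase x hx)]
  push_cast
  ring

def localization (g : Finset V → ℝ) (σ : Finset V) : V → ℝ := fun x => g (insert x σ)

variable [Fintype V] {d : ℕ} (X : WSC V d)

lemma weight_nonneg (β : Finset V) : 0 ≤ X.weight β := by
  by_cases h : β ∈ X.faces ∧ β.card = d + 1
  · exact (X.weight_pos β h.1 h.2).le
  · rw [X.weight_zero β (by tauto)]

lemma W_nonneg (m : ℕ) (β : Finset V) : 0 ≤ X.W m β := by
  unfold W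
  induction d + 1 - m generalizing β with
  | zero => exact X.weight_nonneg β
  | succ t ih => exact mul_nonneg (by positivity) (sum_nonneg fun γ _ => ih γ)

lemma W_eq_sum {m : ℕ} (hm : m ≤ d) (α : Finset V) :
    X.W m α = (1 / ((m : ℝ) + 1)) *
      ∑ β ∈ X.faces.filter (fun β => α ⊆ β ∧ β.card = m + 1), X.W (m + 1) β := by
  rw [W, show d + 1 - m = (d - m) + 1 by omega]
  simp only [Waux, show d + 1 - (d - m) = m + 1 by omega, W, show d + 1 - (m + 1) = d - m by omega]
  norm_num

lemma W_pos {α : Finset V} (hα : α ∈ X.faces) : 0 < X.W α.card α := by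
  obtain ⟨n, hn⟩ : ∃ n, α.card + n = d + 1 := ⟨d + 1 - α.card, by have := X.dim_le α hα; omega⟩
  induction n generalizing α with
  | zero =>
    rw [add_zero] at hn
    rw [hn, W, Nat.sub_self]
    exact X.weight_pos α hα hn
  | succ n ih =>
    obtain ⟨τ, hτ, hατ, hτc⟩ := X.pure α hα
    obtain ⟨β, hαβ, hβτ, hβc⟩ :=
      exists_subsuperset_card_eq hατ (n := α.card + 1) (by omega) (by omega)
    have hβ := X.down_closed τ hτ β hβτ
    rw [X.W_eq_sum (by omega)]
    refine mul_pos (by positivity) (sum_pos' (fun _ _ => X.W_nonneg _ _) ⟨β, ?_, ?_⟩)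
    · exact mem_filter.2 ⟨hβ, hαβ, hβc⟩
    · exact hβc ▸ ih hβ (by omega)

lemma mem_linkVerts {σ : Finset V} {x : V} :
    x ∈ X.linkVerts σ ↔ x ∉ σ ∧ insert x σ ∈ X.faces := by
  simp [linkVerts]

lemma injOn_insert_linkVerts (σ : Finset V) : Set.InjOn (insert · σ) (X.linkVerts σ) :=
  fun _ hx _ _ h => (insert_inj (X.mem_linkVerts.1 hx).1).1 h

lemma cofaces_eq_image (α : Finset V) :
    X.faces.filter (fun β => α ⊆ β ∧ β.card = α.card + 1) =
      (X.linkVerts α).image (insert · α) := by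
  ext β
  have hins : (α ⊆ β ∧ β.card = α.card + 1) ↔ ∃ x ∉ α, insert x α = β := by
    rw [exists_eq_insert_iff, eq_comm]
  simp only [mem_filter, mem_image, mem_linkVerts, hins]
  constructor
  · rintro ⟨hβ, x, hx, rfl⟩
    exact ⟨x, ⟨hx, hβ⟩, rfl⟩
  · rintro ⟨x, ⟨hx, hxα⟩, rfl⟩
    exact ⟨hxα, x, hx, rfl⟩

lemma sum_W_insert {σ : Finset V} (hd : σ.card ≤ d) :
    ∑ x ∈ X.linkVerts σ, X.W (σ.card + 1) (insert x σ) = (σ.card + 1) * X.W σ.card σ := by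
  rw [X.W_eq_sum hd, X.cofaces_eq_image σ, sum_image (X.injOn_insert_linkVerts σ)]
  field_simp

lemma W_mul_downOp {σ : Finset V} (hσ : σ ∈ X.faces) (g : Finset V → ℝ) :
    X.W σ.card σ * X.downOp g σ =
      (1 / ((σ.card : ℝ) + 1)) *
        ∑ x ∈ X.linkVerts σ, X.W (σ.card + 1) (insert x σ) * g (insert x σ) := by
  have := X.W_pos hσ
  rw [downOp, X.cofaces_eq_image σ, sum_image (X.injOn_insert_linkVerts σ), mul_sum, mul_sum]
  refine sum_congr rfl fun x _ => ?_
  field_simp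

lemma sum_linkVerts_eq_sum_erase (m : ℕ) (F : Finset V → V → ℝ) :
    ∑ σ ∈ X.faces.filter (fun σ => σ.card = m), ∑ x ∈ X.linkVerts σ, F σ x =
      ∑ α ∈ X.faces.filter (fun α => α.card = m + 1), ∑ x ∈ α, F (α.erase x) x := by
  rw [sum_sigma', sum_sigma']
  refine sum_nbij' (fun p => ⟨insert p.2 p.1, p.2⟩) (fun q => ⟨q.1.erase q.2, q.2⟩)
    ?_ ?_ ?_ ?_ ?_
  · rintro ⟨σ, x⟩ hp
    simp only [mem_sigma, mem_filter, mem_linkVerts] at hp ⊢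
    obtain ⟨⟨-, hσc⟩, hxσ, hxf⟩ := hp
    exact ⟨⟨hxf, by rw [card_insert_of_notMem hxσ, hσc]⟩, mem_insert_self _ _⟩
  · rintro ⟨α, x⟩ hq
    simp only [mem_sigma, mem_filter, mem_linkVerts] at hq ⊢
    obtain ⟨⟨hαf, hαc⟩, hxα⟩ := hq
    refine ⟨⟨X.down_closed _ hαf _ (erase_subset _ _), by rw [card_erase_of_mem hxα, hαc]; rfl⟩,
      notMem_erase _ _, ?_⟩
    rwa [insert_erase hxα]
  · rintro ⟨σ, x⟩ hp
    simp only [mem_sigma, mem_filter, mem_linkVerts] at hp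
    simp only [erase_insert hp.2.1]
  · rintro ⟨α, x⟩ hq
    simp only [mem_sigma] at hq
    simp only [insert_erase hq.2]
  · rintro ⟨σ, x⟩ hp
    simp only [mem_sigma, mem_linkVerts] at hp
    rw [erase_insert hp.2.1]

lemma linkVerts_insert_swap {σ : Finset V} {x y : V}
    (h : x ∈ X.linkVerts σ ∧ y ∈ X.linkVerts (insert x σ)) :
    y ∈ X.linkVerts σ ∧ x ∈ X.linkVerts (insert y σ) := by
  simp only [mem_linkVerts, mem_insert, not_or] at h ⊢
  obtain ⟨⟨hxσ, -⟩, ⟨hyx, hyσ⟩, hf⟩ := h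
  rw [insert_comm] at hf
  exact ⟨⟨hyσ, X.down_closed _ hf _ (subset_insert x _)⟩, ⟨Ne.symm hyx, hxσ⟩, hf⟩

lemma sum_linkVerts_insert_comm (σ : Finset V) (F : V → V → ℝ) :
    ∑ x ∈ X.linkVerts σ, ∑ y ∈ X.linkVerts (insert x σ), F x y =
      ∑ x ∈ X.linkVerts σ, ∑ y ∈ X.linkVerts (insert x σ), F y x :=
  sum_comm' fun _ _ => ⟨fun h => (X.linkVerts_insert_swap h).symm,
    fun h => X.linkVerts_insert_swap h.symm⟩

lemma W_mul_linkPi_singleton {σ : Finset V} (hσ : σ ∈ X.faces) {x : V} (hx : x ∉ σ) :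
    X.W σ.card σ * X.linkPi σ {x} = X.W (σ.card + 1) (insert x σ) / (σ.card + 1) := by
  have := X.W_pos hσ
  rw [linkPi, union_comm, ← insert_eq, card_insert_of_notMem hx, Nat.choose_succ_self_right]
  push_cast
  field_simp

lemma W_mul_linkPi_pair {σ : Finset V} (hσ : σ ∈ X.faces) {x y : V} (hx : x ∉ σ) (hy : y ∉ σ)
    (hxy : x ≠ y) :
    X.W σ.card σ * X.linkPi σ {x, y} =
      2 * X.W (σ.card + 2) (insert y (insert x σ)) / ((σ.card + 2) * (σ.card + 1)) := by
  have := X.W_pos hσ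
  have hset : σ ∪ {x, y} = insert y (insert x σ) := by
    ext z; simp only [mem_union, mem_insert, mem_singleton]; tauto
  have hcard : (insert y (insert x σ)).card = σ.card + 2 := by
    rw [card_insert_of_notMem (by simp [hy, Ne.symm hxy]), card_insert_of_notMem hx]
  have hchoose : ((σ.card + 2).choose σ.card : ℝ) = (σ.card + 2) * (σ.card + 1) / 2 := by
    rw [Nat.choose_symm_add, Nat.cast_choose_two]
    push_cast
    ring
  rw [linkPi, hset, hcard, hchoose]
  field_simp

lemma linkPi_nonneg (σ τ : Finset V) : 0 ≤ X.linkPi σ τ :=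
  div_nonneg (X.W_nonneg _ _) (mul_nonneg (Nat.cast_nonneg _) (X.W_nonneg _ _))

lemma linkPi_singleton_pos {σ : Finset V} {x : V} (hx : x ∈ X.linkVerts σ) :
    0 < X.linkPi σ {x} := by
  obtain ⟨hxσ, hxf⟩ := X.mem_linkVerts.1 hx
  have hσ := X.down_closed _ hxf σ (subset_insert x σ)
  have hWσ := X.W_pos hσ
  have hWx := X.W_pos hxf
  rw [card_insert_of_notMem hxσ] at hWx
  have h := X.W_mul_linkPi_singleton hσ hxσ
  exact pos_of_mul_pos_right (h ▸ by positivity) hWσ.le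

lemma sum_linkPi_singleton {σ : Finset V} (hσ : σ ∈ X.faces) (hd : σ.card ≤ d) :
    ∑ x ∈ X.linkVerts σ, X.linkPi σ {x} = 1 := by
  have hW := (X.W_pos hσ).ne'
  apply mul_left_cancel₀ hW
  rw [mul_sum, mul_one]
  rw [sum_congr rfl fun x hx => X.W_mul_linkPi_singleton hσ (X.mem_linkVerts.1 hx).1,
    ← sum_div, X.sum_W_insert hd]
  field_simp

lemma sum_linkPi_pair {σ : Finset V} (hσ : σ ∈ X.faces) (hd : σ.card + 1 ≤ d) {x : V}
    (hx : x ∈ X.linkVerts σ) :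
    ∑ y ∈ X.linkVerts (insert x σ), X.linkPi σ {x, y} = 2 * X.linkPi σ {x} := by
  obtain ⟨hxσ, hxf⟩ := X.mem_linkVerts.1 hx
  have hcard : (insert x σ).card = σ.card + 1 := card_insert_of_notMem hxσ
  have hW := (X.W_pos hσ).ne'
  apply mul_left_cancel₀ hW
  have hpair : ∀ y ∈ X.linkVerts (insert x σ), X.W σ.card σ * X.linkPi σ {x, y} =
      2 * X.W (σ.card + 2) (insert y (insert x σ)) / ((σ.card + 2) * (σ.card + 1)) := by
    intro y hy
    obtain ⟨hyxσ, -⟩ := X.mem_linkVerts.1 hy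
    exact X.W_mul_linkPi_pair hσ hxσ (fun h => hyxσ (mem_insert_of_mem h))
      (fun h => hyxσ (h ▸ mem_insert_self x σ))
  have hsum := X.sum_W_insert (σ := insert x σ) (by omega)
  rw [hcard] at hsum
  rw [mul_sum, sum_congr rfl hpair, ← sum_div, ← mul_sum, hsum, mul_left_comm (X.W _ σ),
    X.W_mul_linkPi_singleton hσ hxσ]
  push_cast
  field_simp
  ring

lemma downOp_eq_linkInner {σ : Finset V} (hσ : σ ∈ X.faces) (g : Finset V → ℝ) :
    X.downOp g σ = X.linkInner σ (localization g σ) (fun _ => 1) := by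
  have hW := (X.W_pos hσ).ne'
  apply mul_left_cancel₀ hW
  rw [X.W_mul_downOp hσ, linkInner, mul_sum, mul_sum]
  refine sum_congr rfl fun x hx => ?_
  rw [mul_one, ← mul_assoc (X.W _ σ), X.W_mul_linkPi_singleton hσ (X.mem_linkVerts.1 hx).1,
    localization]
  ring

noncomputable def linkForm (σ : Finset V) (u v : V → ℝ) : ℝ :=
  ∑ x ∈ X.linkVerts σ, ∑ y ∈ X.linkVerts (insert x σ), X.linkPi σ {x, y} / 2 * u x * v y

lemma linkInner_linkWalk (σ : Finset V) (u v : V → ℝ) :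
    X.linkInner σ u (X.linkWalk σ v) = X.linkForm σ u v := by
  refine sum_congr rfl fun x hx => ?_
  obtain ⟨hxσ, -⟩ := X.mem_linkVerts.1 hx
  have hneighbours : (X.linkVerts σ).filter (fun y => y ≠ x ∧ insert y (insert x σ) ∈ X.faces) =
      X.linkVerts (insert x σ) := by
    ext y
    simp only [mem_filter, mem_linkVerts, mem_insert, not_or]
    constructor
    · rintro ⟨⟨hyσ, -⟩, hyx, hf⟩
      exact ⟨⟨hyx, hyσ⟩, hf⟩
    · rintro ⟨⟨hyx, hyσ⟩, hf⟩
      refine ⟨⟨hyσ, X.down_closed _ hf _ ?_⟩, hyx, hf⟩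
      exact insert_subset_insert y (subset_insert x σ)
  have hpos := X.linkPi_singleton_pos hx
  rw [linkWalk, hneighbours, mul_sum]
  refine sum_congr rfl fun y _ => ?_
  field_simp

lemma linkForm_comm (σ : Finset V) (u v : V → ℝ) : X.linkForm σ u v = X.linkForm σ v u := by
  rw [linkForm, linkForm, X.sum_linkVerts_insert_comm]
  refine sum_congr rfl fun x _ => sum_congr rfl fun y _ => ?_
  rw [pair_comm]
  ring

lemma linkForm_const_right {σ : Finset V} (hσ : σ ∈ X.faces) (hd : σ.card + 1 ≤ d) (u : V → ℝ)
    (c : ℝ) : X.linkForm σ u (fun _ => c) = c * X.linkInner σ u (fun _ => 1) := by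
  rw [linkForm, linkInner, mul_sum]
  refine sum_congr rfl fun x hx => ?_
  rw [← sum_mul, ← sum_mul, ← sum_div, X.sum_linkPi_pair hσ hd hx]
  ring

lemma linkInner_self_eq_sum {σ : Finset V} (hσ : σ ∈ X.faces) (hd : σ.card + 1 ≤ d)
    (u : V → ℝ) : X.linkInner σ u u =
      ∑ x ∈ X.linkVerts σ, ∑ y ∈ X.linkVerts (insert x σ), X.linkPi σ {x, y} / 2 * u x ^ 2 := by
  refine sum_congr rfl fun x hx => ?_
  rw [← sum_mul, ← sum_div, X.sum_linkPi_pair hσ hd hx]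
  ring

lemma linkInner_self_add_linkForm_nonneg {σ : Finset V} (hσ : σ ∈ X.faces)
    (hd : σ.card + 1 ≤ d) (u : V → ℝ) {s : ℝ} (hs : s ^ 2 = 1) :
    0 ≤ X.linkInner σ u u + s * X.linkForm σ u u := by
  have h2 : 2 * (X.linkInner σ u u + s * X.linkForm σ u u) =
      ∑ x ∈ X.linkVerts σ, ∑ y ∈ X.linkVerts (insert x σ),
        X.linkPi σ {x, y} / 2 * (u x + s * u y) ^ 2 := by
    have hswap := X.linkInner_self_eq_sum hσ hd u
    rw [X.sum_linkVerts_insert_comm] at hswap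
    rw [mul_add, two_mul]
    nth_rewrite 1 [X.linkInner_self_eq_sum hσ hd u]
    rw [hswap]
    simp only [linkForm, mul_sum, ← sum_add_distrib]
    refine sum_congr rfl fun x _ => sum_congr rfl fun y _ => ?_
    rw [pair_comm y x]
    linear_combination (-(X.linkPi σ {x, y} / 2 * u y ^ 2)) * hs
  have h0 : 0 ≤ ∑ x ∈ X.linkVerts σ, ∑ y ∈ X.linkVerts (insert x σ),
      X.linkPi σ {x, y} / 2 * (u x + s * u y) ^ 2 :=
    sum_nonneg fun x _ => sum_nonneg fun y _ =>
      mul_nonneg (div_nonneg (X.linkPi_nonneg _ _) zero_le_two) (sq_nonneg _)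
  linarith

lemma abs_linkForm_self_le {σ : Finset V} (hσ : σ ∈ X.faces) (hd : σ.card + 1 ≤ d)
    (u : V → ℝ) : |X.linkForm σ u u| ≤ X.linkInner σ u u := by
  have h₁ := X.linkInner_self_add_linkForm_nonneg hσ hd u (s := 1) (by norm_num)
  have h₂ := X.linkInner_self_add_linkForm_nonneg hσ hd u (s := -1) (by norm_num)
  rw [abs_le]
  constructor <;> linarith

lemma linkInner_self_nonneg (σ : Finset V) (u : V → ℝ) : 0 ≤ X.linkInner σ u u :=
  sum_nonneg fun x _ => by
    rw [mul_assoc]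
    exact mul_nonneg (X.linkPi_nonneg σ {x}) (mul_self_nonneg _)

lemma abs_linkRayleigh_le_one {σ : Finset V} (hσ : σ ∈ X.faces) (hd : σ.card + 1 ≤ d)
    (u : V → ℝ) : |X.linkInner σ u (X.linkWalk σ u) / X.linkInner σ u u| ≤ 1 := by
  rw [abs_div, abs_of_nonneg (X.linkInner_self_nonneg σ u), X.linkInner_linkWalk]
  exact div_le_one_of_le₀ (X.abs_linkForm_self_le hσ hd u) (X.linkInner_self_nonneg σ u)

lemma one_mem_upperBounds_linkRayleigh {σ : Finset V} (hσ : σ ∈ X.faces)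
    (hd : σ.card + 1 ≤ d) :
    1 ∈ upperBounds {r : ℝ | ∃ f : V → ℝ, X.linkInner σ f (fun _ => 1) = 0 ∧
      X.linkInner σ f f ≠ 0 ∧ r = X.linkInner σ f (X.linkWalk σ f) / X.linkInner σ f f} := by
  rintro r ⟨f, -, -, rfl⟩
  exact (abs_le.1 (X.abs_linkRayleigh_le_one hσ hd f)).2

lemma linkRayleigh_le_linkLam2 {σ : Finset V} (hσ : σ ∈ X.faces) (hd : σ.card + 1 ≤ d)
    {f : V → ℝ} (hf1 : X.linkInner σ f (fun _ => 1) = 0) (hf : X.linkInner σ f f ≠ 0) :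
    X.linkInner σ f (X.linkWalk σ f) / X.linkInner σ f f ≤ X.linkLam2 σ :=
  le_csSup ⟨1, X.one_mem_upperBounds_linkRayleigh hσ hd⟩ ⟨f, hf1, hf, rfl⟩

lemma linkLam2_le_one {σ : Finset V} (hσ : σ ∈ X.faces) (hd : σ.card + 1 ≤ d) :
    X.linkLam2 σ ≤ 1 :=
  Real.sSup_le (X.one_mem_upperBounds_linkRayleigh hσ hd) zero_le_one

lemma linkLam2_le_gammaC {σ : Finset V} (hσ : σ ∈ X.faces) (hd : σ.card + 1 ≤ d) :
    X.linkLam2 σ ≤ X.gammaC σ.card := by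
  refine le_csSup ⟨1, ?_⟩ ⟨σ, hσ, rfl, rfl⟩
  rintro r ⟨α, hα, hαc, rfl⟩
  exact X.linkLam2_le_one hα (hαc ▸ hd)

lemma neg_one_le_linkLam2 {σ : Finset V} (hσ : σ ∈ X.faces) (hd : σ.card + 1 ≤ d) {x y : V}
    (hx : x ∈ X.linkVerts σ) (hy : y ∈ X.linkVerts σ) (hxy : x ≠ y) : -1 ≤ X.linkLam2 σ := by
  have hwx := X.linkPi_singleton_pos hx
  have hwy := X.linkPi_singleton_pos hy
  set f : V → ℝ := fun z =>
    if z = x then X.linkPi σ {y} else if z = y then -X.linkPi σ {x} else 0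
  have hf : ∀ u : V → ℝ,
      X.linkInner σ f u = X.linkPi σ {x} * X.linkPi σ {y} * (u x - u y) := by
    intro u
    rw [linkInner, sum_eq_add_of_mem x y hx hy hxy fun z _ hz => by simp [f, hz.1, hz.2]]
    simp only [f, if_neg (Ne.symm hxy), ↓reduceIte]
    ring
  have hf1 : X.linkInner σ f (fun _ => 1) = 0 := by rw [hf]; ring
  have hff : 0 < X.linkInner σ f f := by
    rw [hf]
    simp only [f, if_neg (Ne.symm hxy), ↓reduceIte]
    exact mul_pos (mul_pos hwx hwy) (by linarith)
  exact (abs_le.1 (X.abs_linkRayleigh_le_one hσ hd f)).1.trans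
    (X.linkRayleigh_le_linkLam2 hσ hd hf1 hff.ne')

lemma neg_one_le_gammaC_zero (hd : 0 < d) : -1 ≤ X.gammaC 0 := by
  obtain ⟨β, hβ, -, hβc⟩ := X.pure ∅ X.empty_mem
  obtain ⟨x, hxβ, y, hyβ, hxy⟩ := one_lt_card.1 (by omega : 1 < β.card)
  have hvert : ∀ z ∈ β, z ∈ X.linkVerts ∅ := fun z hz =>
    X.mem_linkVerts.2 ⟨notMem_empty z, X.down_closed β hβ _ (by simpa using hz)⟩
  have hd' : (∅ : Finset V).card + 1 ≤ d := by rw [card_empty]; omega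
  exact (X.neg_one_le_linkLam2 X.empty_mem hd' (hvert x hxβ) (hvert y hyβ) hxy).trans
    (X.linkLam2_le_gammaC X.empty_mem hd')

lemma linkInner_add_const_one (σ : Finset V) (u : V → ℝ) (c : ℝ) :
    X.linkInner σ (fun x => u x + c) (fun _ => 1) =
      X.linkInner σ u (fun _ => 1) + c * X.linkInner σ (fun _ => 1) (fun _ => 1) := by
  simp only [linkInner, mul_sum, ← sum_add_distrib]
  exact sum_congr rfl fun x _ => by ring

lemma linkInner_add_const_self (σ : Finset V) (u : V → ℝ) (c : ℝ) :
    X.linkInner σ (fun x => u x + c) (fun x => u x + c) = X.linkInner σ u u +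
      2 * c * X.linkInner σ u (fun _ => 1) + c ^ 2 * X.linkInner σ (fun _ => 1) (fun _ => 1) := by
  simp only [linkInner, mul_sum, ← sum_add_distrib]
  exact sum_congr rfl fun x _ => by ring

lemma linkForm_add_const_self (σ : Finset V) (u : V → ℝ) (c : ℝ) :
    X.linkForm σ (fun x => u x + c) (fun x => u x + c) = X.linkForm σ u u +
      c * (X.linkForm σ u (fun _ => 1) + X.linkForm σ (fun _ => 1) u) +
      c ^ 2 * X.linkForm σ (fun _ => 1) (fun _ => 1) := by
  simp only [linkForm, mul_sum, ← sum_add_distrib]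
  exact sum_congr rfl fun x _ => sum_congr rfl fun y _ => by ring

lemma linkInner_linkWalk_self_le {σ : Finset V} (hσ : σ ∈ X.faces) (hd : σ.card + 1 ≤ d)
    {γ : ℝ} (hγ : X.linkLam2 σ ≤ γ) (h : V → ℝ) :
    X.linkInner σ h (X.linkWalk σ h) ≤ X.linkInner σ h (fun _ => 1) ^ 2 +
      γ * (X.linkInner σ h h - X.linkInner σ h (fun _ => 1) ^ 2) := by
  set c := X.linkInner σ h (fun _ => 1)
  set p : V → ℝ := fun x => h x - c
  have hone : X.linkInner σ (fun _ => 1) (fun _ => 1) = 1 := by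
    simpa [linkInner] using X.sum_linkPi_singleton hσ (by omega)
  have hh : h = fun x => p x + c := by funext x; simp [p]
  have hp1 : X.linkInner σ p (fun _ => 1) = 0 := by
    have := X.linkInner_add_const_one σ p c
    rw [← hh, hone] at this
    linarith
  have hpp : X.linkInner σ h h = X.linkInner σ p p + c ^ 2 := by
    rw [hh, X.linkInner_add_const_self, hp1, hone]
    ring
  have hform : X.linkForm σ h h = X.linkForm σ p p + c ^ 2 := by
    rw [hh, X.linkForm_add_const_self, X.linkForm_comm σ (fun _ => 1) p,
      X.linkForm_const_right hσ hd, X.linkForm_const_right hσ hd, hp1, hone]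
    ring
  have hpγ : X.linkForm σ p p ≤ γ * X.linkInner σ p p := by
    rcases (X.linkInner_self_nonneg σ p).eq_or_lt with hz | hpos
    · rw [← hz, mul_zero]
      exact (le_abs_self _).trans (hz ▸ X.abs_linkForm_self_le hσ hd p)
    · have := X.linkRayleigh_le_linkLam2 hσ hd hp1 hpos.ne'
      rw [X.linkInner_linkWalk, div_le_iff₀ hpos] at this
      exact this.trans (mul_le_mul_of_nonneg_right hγ hpos.le)
  rw [X.linkInner_linkWalk, hform, hpp]
  linarith

lemma W_mul_self_nonneg (m : ℕ) (u : Finset V → ℝ) (α : Finset V) :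
    0 ≤ X.W m α * u α * u α := by
  rw [mul_assoc]
  exact mul_nonneg (X.W_nonneg _ _) (mul_self_nonneg _)

lemma inn_self_nonneg (m : ℕ) (u : Finset V → ℝ) : 0 ≤ X.inn m u u :=
  sum_nonneg fun α _ => X.W_mul_self_nonneg m u α

lemma inn_comm (m : ℕ) (u v : Finset V → ℝ) : X.inn m u v = X.inn m v u :=
  sum_congr rfl fun _ _ => by ring

lemma inn_sq_le (m : ℕ) (u v : Finset V → ℝ) :
    X.inn m u v ^ 2 ≤ X.inn m u u * X.inn m v v :=
  sum_sq_le_sum_mul_sum_of_sq_le_mul _ (fun α _ => X.W_mul_self_nonneg m u α)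
    (fun α _ => X.W_mul_self_nonneg m v α) (fun α _ => le_of_eq (by ring))

lemma inn_zero_eq (u v : Finset V → ℝ) : X.inn 0 u v = X.W 0 ∅ * u ∅ * v ∅ := by
  have : X.faces.filter (fun α => α.card = 0) = {∅} := by
    ext α
    simpa [card_eq_zero] using fun h : α = ∅ => h ▸ X.empty_mem
  rw [inn, this, sum_singleton]

lemma inn_upOp (m : ℕ) (u v : Finset V → ℝ) :
    X.inn (m + 1) (upOp u) v = X.inn m u (X.downOp v) := by
  have hdown : X.inn m u (X.downOp v) = ∑ σ ∈ X.faces.filter (fun σ => σ.card = m),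
      ∑ x ∈ X.linkVerts σ, X.W (m + 1) (insert x σ) * v (insert x σ) * u σ / (m + 1) := by
    refine sum_congr rfl fun σ hσ => ?_
    obtain ⟨hσf, rfl⟩ := mem_filter.1 hσ
    rw [mul_right_comm, X.W_mul_downOp hσf, mul_sum, sum_mul]
    exact sum_congr rfl fun x _ => by ring
  rw [hdown, X.sum_linkVerts_eq_sum_erase]
  refine sum_congr rfl fun α hα => ?_
  obtain ⟨-, hαc⟩ := mem_filter.1 hα
  rw [sum_congr rfl fun x hx => by rw [insert_erase hx], upOp, hαc, mul_sum, mul_sum, sum_mul]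
  push_cast
  exact sum_congr rfl fun x _ => by ring

lemma downOp_one {α : Finset V} (hα : α ∈ X.faces) (hd : α.card ≤ d) :
    X.downOp (fun _ => 1) α = 1 := by
  simpa [X.downOp_eq_linkInner hα, linkInner, localization] using X.sum_linkPi_singleton hα hd

lemma inn_upOp_one {m : ℕ} (hm : m ≤ d) (g : Finset V → ℝ) :
    X.inn (m + 1) (upOp g) (fun _ => 1) = X.inn m g (fun _ => 1) := by
  rw [X.inn_upOp]
  refine sum_congr rfl fun α hα => ?_
  obtain ⟨hαf, rfl⟩ := mem_filter.1 hα
  rw [X.downOp_one hαf hm]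

lemma inn_downOp_one (m : ℕ) (g : Finset V → ℝ) :
    X.inn m (X.downOp g) (fun _ => 1) = X.inn (m + 1) g (fun _ => 1) := by
  rw [X.inn_comm, ← X.inn_upOp, X.inn_comm]
  refine sum_congr rfl fun β hβ => ?_
  rw [upOp_one (card_pos.1 (by rw [(mem_filter.1 hβ).2]; omega))]

lemma inn_downOp_iterate (j m : ℕ) (u v : Finset V → ℝ) :
    X.inn m u (X.downOp^[j] v) = X.inn (m + j) (upOp^[j] u) v := by
  induction j generalizing v with
  | zero => rfl
  | succ j ih =>
    rw [Function.iterate_succ_apply, ih, ← X.inn_upOp, ← Function.iterate_succ_apply' upOp,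
      ← add_assoc]

lemma inn_upOp_iterate_one {m t : ℕ} (hmt : m + t ≤ d + 1) (f : Finset V → ℝ) :
    X.inn (m + t) (upOp^[t] f) (fun _ => 1) = X.inn m f (fun _ => 1) := by
  induction t with
  | zero => rfl
  | succ t ih =>
    rw [Function.iterate_succ_apply', ← add_assoc, X.inn_upOp_one (by omega), ih (by omega)]

lemma inn_upOp_self {m : ℕ} (hm : m + 1 ≤ d) (g : Finset V → ℝ) :
    (m + 2) * X.inn (m + 2) (upOp g) (upOp g) = X.inn (m + 1) g g +
      (∑ α ∈ X.faces.filter (fun α => α.card = m + 1), ∑ x ∈ α, ∑ y ∈ X.linkVerts α,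
        X.W (m + 2) (insert y α) * g α * g (insert y (α.erase x))) / (m + 2) := by
  rw [X.inn_upOp, inn, inn, mul_sum, sum_div, ← sum_add_distrib]
  refine sum_congr rfl fun α hα => ?_
  obtain ⟨hαf, hαc⟩ := mem_filter.1 hα
  have hins := X.sum_W_insert (σ := α) (by omega)
  rw [hαc] at hins
  have hdown := X.W_mul_downOp hαf (upOp g)
  rw [hαc] at hdown
  rw [mul_right_comm (X.W _ α), hdown, sum_comm,
    sum_congr rfl fun y hy => by rw [upOp_insert g (X.mem_linkVerts.1 hy).1, hαc]]
  simp only [mul_add, add_div, sum_add_distrib, Nat.cast_add, Nat.cast_one,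
    show m + 1 + 1 = m + 2 from rfl] at hins ⊢
  set k : ℝ := (m : ℝ) + 1 + 1
  have hA : ∑ y ∈ X.linkVerts α, X.W (m + 2) (insert y α) * (g α / k) =
      (∑ y ∈ X.linkVerts α, X.W (m + 2) (insert y α)) * (g α / k) := (sum_mul ..).symm
  have hB : ∑ y ∈ X.linkVerts α, X.W (m + 2) (insert y α) *
      ((∑ x ∈ α, g (insert y (α.erase x))) / k) =
      (∑ y ∈ X.linkVerts α, ∑ x ∈ α, X.W (m + 2) (insert y α) * g (insert y (α.erase x))) / k := by
    rw [sum_div]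
    exact sum_congr rfl fun y _ => by rw [mul_div_assoc', mul_sum, sum_div]
  have hC : ∑ y ∈ X.linkVerts α, ∑ x ∈ α,
      X.W (m + 2) (insert y α) * g α * g (insert y (α.erase x)) =
      g α * ∑ y ∈ X.linkVerts α, ∑ x ∈ α, X.W (m + 2) (insert y α) * g (insert y (α.erase x)) := by
    rw [mul_sum]
    exact sum_congr rfl fun y _ => by rw [mul_sum]; exact sum_congr rfl fun x _ => by ring
  rw [hA, hB, hC, hins]
  simp only [k]
  field_simp
  ring

lemma sum_W_mul_linkInner_self (m : ℕ) (g : Finset V → ℝ) :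
    ∑ σ ∈ X.faces.filter (fun σ => σ.card = m),
      X.W m σ * X.linkInner σ (localization g σ) (localization g σ) = X.inn (m + 1) g g := by
  have hlocal : ∀ σ ∈ X.faces.filter (fun σ => σ.card = m),
      X.W m σ * X.linkInner σ (localization g σ) (localization g σ) =
        ∑ x ∈ X.linkVerts σ, X.W (m + 1) (insert x σ) * g (insert x σ) * g (insert x σ) /
          (m + 1) := by
    intro σ hσ
    obtain ⟨hσf, rfl⟩ := mem_filter.1 hσ
    rw [linkInner, mul_sum]
    refine sum_congr rfl fun x hx => ?_
    rw [← mul_assoc, ← mul_assoc, X.W_mul_linkPi_singleton hσf (X.mem_linkVerts.1 hx).1,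
      localization]
    ring
  rw [sum_congr rfl hlocal, X.sum_linkVerts_eq_sum_erase, inn]
  refine sum_congr rfl fun α hα => ?_
  obtain ⟨-, hαc⟩ := mem_filter.1 hα
  rw [sum_congr rfl fun x hx => by rw [insert_erase hx], sum_const, hαc, nsmul_eq_mul]
  push_cast
  field_simp

lemma sum_W_mul_linkForm (m : ℕ) (g : Finset V → ℝ) :
    ∑ σ ∈ X.faces.filter (fun σ => σ.card = m),
      X.W m σ * X.linkForm σ (localization g σ) (localization g σ) =
    (∑ α ∈ X.faces.filter (fun α => α.card = m + 1), ∑ x ∈ α, ∑ y ∈ X.linkVerts α,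
        X.W (m + 2) (insert y α) * g α * g (insert y (α.erase x))) / ((m + 2) * (m + 1)) := by
  have hlocal : ∀ σ ∈ X.faces.filter (fun σ => σ.card = m),
      X.W m σ * X.linkForm σ (localization g σ) (localization g σ) =
        ∑ x ∈ X.linkVerts σ, ∑ y ∈ X.linkVerts (insert x σ), X.W (m + 2) (insert y (insert x σ)) *
          g (insert x σ) * g (insert y σ) / ((m + 2) * (m + 1)) := by
    intro σ hσ
    obtain ⟨hσf, rfl⟩ := mem_filter.1 hσ
    rw [linkForm, mul_sum]
    refine sum_congr rfl fun x hx => ?_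
    rw [mul_sum]
    refine sum_congr rfl fun y hy => ?_
    obtain ⟨hxσ, -⟩ := X.mem_linkVerts.1 hx
    obtain ⟨hyxσ, -⟩ := X.mem_linkVerts.1 hy
    have hpair := X.W_mul_linkPi_pair hσf hxσ (fun h => hyxσ (mem_insert_of_mem h))
      (fun h => hyxσ (h ▸ mem_insert_self x σ))
    rw [localization, localization]
    linear_combination (g (insert x σ) * g (insert y σ) / 2) * hpair
  rw [sum_congr rfl hlocal, X.sum_linkVerts_eq_sum_erase, sum_div]
  refine sum_congr rfl fun α _ => ?_
  rw [sum_div]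
  refine sum_congr rfl fun x hx => ?_
  rw [insert_erase hx, sum_div]

lemma inn_upOp_self_le {m : ℕ} (hm : m + 1 ≤ d) {γ : ℝ} (hγ : X.gammaC m ≤ γ)
    (g : Finset V → ℝ) :
    (m + 2) * X.inn (m + 2) (upOp g) (upOp g) ≤ X.inn (m + 1) g g +
      (m + 1) * (X.inn m (X.downOp g) (X.downOp g) +
        γ * (X.inn (m + 1) g g - X.inn m (X.downOp g) (X.downOp g))) := by
  have hglobal : (m + 2) * X.inn (m + 2) (upOp g) (upOp g) = X.inn (m + 1) g g +
      (m + 1) * ∑ σ ∈ X.faces.filter (fun σ => σ.card = m),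
        X.W m σ * X.linkForm σ (localization g σ) (localization g σ) := by
    rw [X.inn_upOp_self hm, X.sum_W_mul_linkForm]
    field_simp
  have hlocal : ∀ σ ∈ X.faces.filter (fun σ => σ.card = m),
      X.W m σ * X.linkForm σ (localization g σ) (localization g σ) ≤
        X.W m σ * X.downOp g σ * X.downOp g σ + γ * (X.W m σ *
          X.linkInner σ (localization g σ) (localization g σ) -
            X.W m σ * X.downOp g σ * X.downOp g σ) := by
    intro σ hσ
    obtain ⟨hσf, rfl⟩ := mem_filter.1 hσ
    have hγσ := (X.linkLam2_le_gammaC hσf (by omega)).trans hγ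
    have := X.linkInner_linkWalk_self_le hσf (by omega) hγσ (localization g σ)
    rw [X.linkInner_linkWalk, ← X.downOp_eq_linkInner hσf] at this
    linarith [mul_le_mul_of_nonneg_left this (X.W_nonneg σ.card σ)]
  have hsum := sum_le_sum hlocal
  rw [sum_add_distrib, ← mul_sum, sum_sub_distrib, X.sum_W_mul_linkInner_self] at hsum
  change _ ≤ X.inn m (X.downOp g) (X.downOp g) +
    γ * (_ - X.inn m (X.downOp g) (X.downOp g)) at hsum
  rw [hglobal]
  gcongr

lemma inn_downOp_self_le {m : ℕ} {c : ℝ} (hc : 0 ≤ c)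
    (hU : ∀ h, X.inn m h (fun _ => 1) = 0 →
      (m + 1) * X.inn (m + 1) (upOp h) (upOp h) ≤ c * X.inn m h h)
    {g : Finset V → ℝ} (hg : X.inn (m + 1) g (fun _ => 1) = 0) :
    (m + 1) * X.inn m (X.downOp g) (X.downOp g) ≤ c * X.inn (m + 1) g g := by
  have hG := X.inn_self_nonneg (m + 1) g
  have hUD := hU (X.downOp g) (by rw [X.inn_downOp_one, hg])
  have hCS := X.inn_sq_le (m + 1) (upOp (X.downOp g)) g
  rw [X.inn_upOp] at hCS
  rcases (X.inn_self_nonneg m (X.downOp g)).eq_or_lt with hR | hR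
  · rw [← hR, mul_zero]
    positivity
  · refine le_of_mul_le_mul_right ?_ hR
    nlinarith

theorem upOp_contraction {γ : ℝ} (hγ1 : -1 ≤ γ) (hγ : ∀ k < d, X.gammaC k ≤ γ) {m : ℕ}
    (hm : m ≤ d) {g : Finset V → ℝ} (hg : X.inn m g (fun _ => 1) = 0) :
    (m + 1) * X.inn (m + 1) (upOp g) (upOp g) ≤ (1 + γ) * m * X.inn m g g := by
  induction m generalizing g with
  | zero =>
    rw [X.inn_upOp, X.inn_zero_eq]
    rw [X.inn_zero_eq, mul_one] at hg
    simp [hg]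
  | succ m ih =>
    have hR := X.inn_downOp_self_le (mul_nonneg (by linarith) (Nat.cast_nonneg m))
      (fun h hh => ih (by omega) hh) hg
    have hE := X.inn_upOp_self_le hm (hγ m (by omega)) g
    have hR0 := X.inn_self_nonneg m (X.downOp g)
    have hG0 := X.inn_self_nonneg (m + 1) g
    push_cast
    rw [show m + 1 + 1 = m + 2 from rfl]
    -- it remains to show `(m + 1) (1 - γ) ‖D g‖² ≤ m ‖g‖²`
    rcases le_or_gt γ 1 with h | h
    · nlinarith [mul_le_mul_of_nonneg_left hR (show (0 : ℝ) ≤ 1 - γ by linarith),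
        mul_nonneg (mul_nonneg (sq_nonneg γ) (Nat.cast_nonneg m)) hG0]
    · nlinarith [mul_nonneg (mul_nonneg (show (0 : ℝ) ≤ m + 1 by positivity) hR0)
        (show (0 : ℝ) ≤ γ - 1 by linarith), mul_nonneg (Nat.cast_nonneg (α := ℝ) m) hG0]

theorem upOp_iterate_contraction {γ : ℝ} (hγ1 : -1 ≤ γ) (hγ : ∀ k < d, X.gammaC k ≤ γ)
    {m t : ℕ} (hmt : m + t ≤ d + 1) {f : Finset V → ℝ} (hf : X.inn m f (fun _ => 1) = 0) :
    (m + t) * X.inn (m + t) (upOp^[t] f) (upOp^[t] f) ≤ (1 + γ) ^ t * m * X.inn m f f := by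
  induction t with
  | zero => simp
  | succ t ih =>
    have hstep := X.upOp_contraction hγ1 hγ (m := m + t) (by omega)
      ((X.inn_upOp_iterate_one (by omega) f).trans hf)
    rw [Function.iterate_succ_apply', ← add_assoc]
    push_cast at hstep ⊢
    calc ((m : ℝ) + (t + 1)) * _ = (m + t + 1) * _ := by ring
      _ ≤ (1 + γ) * (m + t) * X.inn (m + t) (upOp^[t] f) (upOp^[t] f) := hstep
      _ ≤ (1 + γ) * ((1 + γ) ^ t * m * X.inn m f f) := by
        rw [mul_assoc]; exact mul_le_mul_of_nonneg_left (ih (by omega)) (by linarith)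
      _ = (1 + γ) ^ (t + 1) * m * X.inn m f f := by ring

theorem lam2_upDownAB_le_pow {γ : ℝ} (hγ1 : -1 ≤ γ) (hγ : ∀ k < d, X.gammaC k ≤ γ)
    {a t : ℕ} (hat : a + 1 + t ≤ d + 1) :
    X.lam2 (a + 1) (X.upDownAB t) ≤ (1 + γ) ^ t * (((a : ℝ) + 1) / ((a : ℝ) + 1 + t)) := by
  refine Real.sSup_le ?_ (mul_nonneg (pow_nonneg (by linarith) _) (by positivity))
  rintro r ⟨f, hf1, hf, rfl⟩
  have hpos := (X.inn_self_nonneg _ f).lt_of_ne' hf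
  have hchain := X.upOp_iterate_contraction hγ1 hγ hat hf1
  push_cast at hchain
  rw [upDownAB, X.inn_downOp_iterate, div_le_iff₀ hpos, mul_div_assoc', div_mul_eq_mul_div,
    le_div_iff₀ (by positivity)]
  linarith

end WSC

/-- **Corollary (longer walks on local-spectral expanders).** Let `(X, Π)` be a
weighted pure `d`-dimensional simplicial complex which is a `γ`-local-spectral
expander (`γ_j ≤ γ` for all `-1 ≤ j ≤ d-2`, i.e. `X.gammaC m ≤ γ` for all `m < d`),
and let `0 ≤ a < b ≤ d-1`.  Then `λ₂(U_{a,b}) ≤ (1+γ)^{b-a} (a+1)/(b+1)`; in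
particular, if `γ ≤ ε/(b-a)` with `0 ≤ ε ≤ 1`, then
`λ₂(U_{a,b}) ≤ e^ε (a+1)/(b+1)`. -/
theorem lam2_upDownAB_le {V : Type*} [DecidableEq V] [Fintype V] {d : ℕ}
    (X : WSC V d) (γ : ℝ) (hX : ∀ m : ℕ, m < d → X.gammaC m ≤ γ)
    (a b : ℕ) (hab : a < b) (hbd : b < d) :
    X.lam2 (a + 1) (X.upDownAB (b - a)) ≤
      (1 + γ) ^ (b - a) * (((a : ℝ) + 1) / ((b : ℝ) + 1)) ∧
    ∀ ε : ℝ, 0 ≤ ε → ε ≤ 1 → γ ≤ ε / ((b - a : ℕ) : ℝ) →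
      X.lam2 (a + 1) (X.upDownAB (b - a)) ≤
        Real.exp ε * (((a : ℝ) + 1) / ((b : ℝ) + 1)) := by
  have hγ1 : -1 ≤ γ := (X.neg_one_le_gammaC_zero (by omega)).trans (hX 0 (by omega))
  have hbound := X.lam2_upDownAB_le_pow hγ1 hX (a := a) (t := b - a) (by omega)
  rw [Nat.cast_sub hab.le, show (a : ℝ) + 1 + (b - a) = b + 1 by ring] at hbound
  refine ⟨hbound, fun ε _ _ hγε => hbound.trans ?_⟩
  gcongr
  exact one_add_pow_le_exp (by omega) hγ1 hγε
end

section
/- Let G = (V, E) be a finite simple graph with maximum degree Δ and let k be an integer with k ≤ |V|/(Δ+1). For every independent set S of G with |S| ≤ k − 2, any two distinct vertices of the graph H_S are joined in H_S by a path of length at most two; in particular, H_S is connected. -/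
open Finset

variable {V : Type*} [Fintype V] [DecidableEq V]

/-- The independent sets of size `k` of a finite simple graph `G`. -/
def IndepSets (G : SimpleGraph V) [DecidableRel G.Adj] (k : ℕ) : Finset (Finset V) :=
  Finset.univ.filter (fun S => S.card = k ∧ ∀ u ∈ S, ∀ v ∈ S, ¬ G.Adj u v)

/-- The transition probability of the `(k-1)`-th down-up walk on size-`k`
independent sets of `G`: from `S`, pick a uniformly random `v ∈ S`, then a
uniformly random independent set `T` of size `k` with `T ⊇ S \ {v}`. -/
noncomputable def duP (G : SimpleGraph V) [DecidableRel G.Adj] (k : ℕ)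
    (S T : Finset V) : ℝ :=
  (1 / (k : ℝ)) * ∑ v ∈ S,
    if S.erase v ⊆ T then
      (1 : ℝ) / (((IndepSets G k).filter (fun T' => S.erase v ⊆ T')).card : ℝ)
    else 0

/-- The second largest eigenvalue of the down-up walk on size-`k` independent sets:
the walk is self-adjoint with respect to its stationary distribution, the uniform
distribution on `IndepSets G k`, so by the variational principle `λ₂` is the
supremum of Rayleigh quotients of (nonzero) functions orthogonal to the constants. -/
noncomputable def duLam2 (G : SimpleGraph V) [DecidableRel G.Adj] (k : ℕ) : ℝ :=
  sSup { r : ℝ | ∃ f : Finset V → ℝ,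
    (∑ S ∈ IndepSets G k, f S) = 0 ∧ (∑ S ∈ IndepSets G k, f S ^ 2) ≠ 0 ∧
    r = (∑ S ∈ IndepSets G k, f S * ∑ T ∈ IndepSets G k, duP G k S T * f T) /
        (∑ S ∈ IndepSets G k, f S ^ 2) }

/-- The smallest eigenvalue of a real symmetric matrix, via the variational
principle: the infimum of its Rayleigh quotients. -/
noncomputable def lamMin (A : Matrix V V ℝ) : ℝ :=
  sInf { r : ℝ | ∃ f : V → ℝ, (∑ x, f x ^ 2) ≠ 0 ∧
    r = (∑ x, f x * ∑ y, A x y * f y) / (∑ x, f x ^ 2) }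

/-- The closed neighbourhood `N[S]` of a set `S` of vertices: `S` together with all
vertices having a neighbour in `S`. -/
def closedNbhd (G : SimpleGraph V) [DecidableRel G.Adj] (S : Finset V) : Finset V :=
  S ∪ Finset.univ.filter (fun v => ∃ u ∈ S, G.Adj u v)

/-- **Lemma (connectivity of the links).** Let `G` be a finite simple graph with
maximum degree `Δ` and `k ≤ |V|/(Δ+1)`.  For every independent set `S` of `G` with
`|S| ≤ k - 2`, any two distinct vertices `u, v` of `H_S` (the complement of the
induced subgraph of `G` on `V ∖ N[S]`) are joined in `H_S` by a path of length at
most two: they are adjacent in `H_S` (i.e. non-adjacent in `G`), or have a common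
`H_S`-neighbour.  In particular `H_S` is connected. -/
theorem hs_path_length_two (G : SimpleGraph V) [DecidableRel G.Adj] (k : ℕ)
    (hk : (k : ℝ) ≤ (Fintype.card V : ℝ) / ((G.maxDegree : ℝ) + 1))
    (S : Finset V) (hS : ∀ u ∈ S, ∀ v ∈ S, ¬ G.Adj u v) (hcard : S.card + 2 ≤ k)
    (u v : V) (hu : u ∉ closedNbhd G S) (hv : v ∉ closedNbhd G S) (huv : u ≠ v) :
    ¬ G.Adj u v ∨
      ∃ w, w ∉ closedNbhd G S ∧ w ≠ u ∧ w ≠ v ∧ ¬ G.Adj u w ∧ ¬ G.Adj w v := by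
  by_cases hadj : G.Adj u v
  · right
    set Δ := G.maxDegree with hΔ
    have hΔpos : (0:ℝ) < (Δ:ℝ) + 1 := by positivity
    have hkn : k * (Δ + 1) ≤ Fintype.card V := by
      have h1 : (k:ℝ) * ((Δ:ℝ) + 1) ≤ (Fintype.card V : ℝ) :=
        (le_div_iff₀ hΔpos).mp hk
      exact_mod_cast h1
    have hNS : (closedNbhd G S).card ≤ S.card * (Δ + 1) := by
      have hsub : closedNbhd G S ⊆ S.biUnion (fun x => insert x (G.neighborFinset x)) := by
        intro w hw
        rcases Finset.mem_union.mp hw with hw | hw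
        · exact Finset.mem_biUnion.mpr ⟨w, hw, Finset.mem_insert_self _ _⟩
        · obtain ⟨x, hx, hxw⟩ := (Finset.mem_filter.mp hw).2
          exact Finset.mem_biUnion.mpr ⟨x, hx,
            Finset.mem_insert_of_mem (G.mem_neighborFinset x w |>.mpr hxw)⟩
      calc (closedNbhd G S).card ≤ (S.biUnion (fun x => insert x (G.neighborFinset x))).card :=
              Finset.card_le_card hsub
        _ ≤ ∑ x ∈ S, (insert x (G.neighborFinset x)).card := Finset.card_biUnion_le
        _ ≤ ∑ _x ∈ S, (Δ + 1) := by
              refine Finset.sum_le_sum fun x _ => ?_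
              calc (insert x (G.neighborFinset x)).card
                  ≤ (G.neighborFinset x).card + 1 := Finset.card_insert_le _ _
                _ ≤ Δ + 1 := Nat.add_le_add_right (G.degree_le_maxDegree x) 1
        _ = S.card * (Δ + 1) := by rw [Finset.sum_const, smul_eq_mul]
    set B := G.neighborFinset u ∪ G.neighborFinset v with hB
    have hBcard : B.card ≤ 2 * Δ := by
      calc B.card ≤ (G.neighborFinset u).card + (G.neighborFinset v).card :=
            Finset.card_union_le _ _
        _ ≤ Δ + Δ := Nat.add_le_add (G.degree_le_maxDegree u) (G.degree_le_maxDegree v)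
        _ = 2 * Δ := by ring
    have hlt : (closedNbhd G S ∪ B).card < Fintype.card V := by
      have h2 : (S.card + 2) * (Δ + 1) ≤ k * (Δ + 1) := Nat.mul_le_mul_right _ hcard
      calc (closedNbhd G S ∪ B).card ≤ (closedNbhd G S).card + B.card :=
            Finset.card_union_le _ _
        _ ≤ S.card * (Δ + 1) + 2 * Δ := Nat.add_le_add hNS hBcard
        _ < (S.card + 2) * (Δ + 1) := by nlinarith
        _ ≤ k * (Δ + 1) := h2
        _ ≤ Fintype.card V := hkn
    have hss : closedNbhd G S ∪ B ⊂ Finset.univ := by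
      refine Finset.ssubset_univ_iff.mpr ?_
      intro h
      rw [h, Finset.card_univ] at hlt
      exact lt_irrefl _ hlt
    obtain ⟨w, hw_univ, hw⟩ := Finset.exists_of_ssubset hss
    have hwN : w ∉ closedNbhd G S := fun h => hw (Finset.mem_union_left _ h)
    have hwB : w ∉ B := fun h => hw (Finset.mem_union_right _ h)
    have hwu : ¬ G.Adj u w := fun h => hwB (Finset.mem_union_left _
      ((G.mem_neighborFinset u w).mpr h))
    have hwv : ¬ G.Adj v w := fun h => hwB (Finset.mem_union_right _
      ((G.mem_neighborFinset v w).mpr h))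
    refine ⟨w, hwN, ?_, ?_, hwu, fun h => hwv h.symm⟩
    · rintro rfl
      exact hwB (Finset.mem_union_right _ ((G.mem_neighborFinset v w).mpr hadj.symm))
    · rintro rfl
      exact hwB (Finset.mem_union_left _ ((G.mem_neighborFinset u w).mpr hadj))
  · exact Or.inl hadj
end

section
/- Let G = (V, E) be a finite simple graph with n vertices and maximum degree Δ, having at least one edge, and let k ≥ 2 be an integer with k ≤ n / (Δ + |λ_min(A_G)|). Then for every independent set S of G with |S| = k − 2, the random walk matrix of the graph H_S satisfies λ₂ ≤ 1/k. -/
open Finset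

variable {V : Type*} [Fintype V] [DecidableEq V]

/-- The vertex set of `H_S`, the complement of the induced subgraph of `G` on
`V ∖ N[S]`. -/
def hsVerts (G : SimpleGraph V) [DecidableRel G.Adj] (S : Finset V) : Finset V :=
  Finset.univ \ closedNbhd G S

/-- The neighbours of `v` in `H_S`: the vertices of `H_S` distinct from `v` and
non-adjacent to `v` in `G`. -/
def hsNbrs (G : SimpleGraph V) [DecidableRel G.Adj] (S : Finset V) (v : V) :
    Finset V :=
  (hsVerts G S).filter (fun u => u ≠ v ∧ ¬ G.Adj v u)

/-- The second largest eigenvalue of the random walk matrix `D⁻¹A` of the graph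
`H_S`: the walk is self-adjoint with respect to the degree-proportional stationary
distribution, so by the variational principle `λ₂` is the supremum of Rayleigh
quotients of (nonzero) functions orthogonal to the constants in the
degree-weighted inner product. -/
noncomputable def hsLam2 (G : SimpleGraph V) [DecidableRel G.Adj] (S : Finset V) :
    ℝ :=
  sSup { r : ℝ | ∃ f : V → ℝ,
    (∑ v ∈ hsVerts G S, ((hsNbrs G S v).card : ℝ) * f v) = 0 ∧
    (∑ v ∈ hsVerts G S, ((hsNbrs G S v).card : ℝ) * f v ^ 2) ≠ 0 ∧
    r = (∑ v ∈ hsVerts G S, f v * ∑ u ∈ hsNbrs G S v, f u) /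
        (∑ v ∈ hsVerts G S, ((hsNbrs G S v).card : ℝ) * f v ^ 2) }

/-!
Put `W = V ∖ N[S]`, `μ = λ_min(A_G)`, and let `d(v) ≤ Δ` count the `G`-neighbours of `v`
inside `W`, so that `v` has degree `|W| - 1 - d(v)` in `H_S`. For `f` on `W` write `T = ∑ f`,
`F = ∑ f²` and `Q = fᵀ A_W f`; the numerator of the Rayleigh quotient of `f` in `H_S` is
`T² - F - Q`. By interlacing, `A_W - μ I` is positive semidefinite, and orthogonality of `f` to
the constants in the degree-weighted product reads `fᵀ A_W 𝟙 = (|W| - 1) T`; testing the form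
against `f - a 𝟙` (Cauchy–Schwarz) gives `T² ≤ Q - μ F`. So the numerator is at most
`(-μ - 1) F`, the denominator at least `(|W| - 1 - Δ) F`, and `k (-μ - 1) ≤ |W| - 1 - Δ`
because `|N[S]| ≤ (k - 2)(Δ + 1)` and `n ≥ k (Δ - μ)`; an edge forces `μ ≤ -1`.
-/

open Matrix

omit [DecidableEq V] in
theorem abs_mul_le_sum_sq (f : V → ℝ) (x y : V) : |f x * f y| ≤ ∑ z, f z ^ 2 := by
  have hx := Finset.single_le_sum (fun z _ => sq_nonneg (f z)) (Finset.mem_univ x)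
  have hy := Finset.single_le_sum (fun z _ => sq_nonneg (f z)) (Finset.mem_univ y)
  rw [abs_mul]
  nlinarith [two_mul_le_add_sq |f x| |f y|, sq_abs (f x), sq_abs (f y)]

omit [DecidableEq V] in
theorem bddBelow_rayleigh (A : Matrix V V ℝ) :
    BddBelow { r : ℝ | ∃ f : V → ℝ, (∑ x, f x ^ 2) ≠ 0 ∧
      r = (∑ x, f x * ∑ y, A x y * f y) / (∑ x, f x ^ 2) } := by
  refine ⟨-∑ x, ∑ y, |A x y|, ?_⟩
  rintro r ⟨f, hf, rfl⟩
  have hpos : 0 < ∑ x, f x ^ 2 := (Finset.sum_nonneg fun x _ => sq_nonneg (f x)).lt_of_ne' hf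
  rw [le_div_iff₀ hpos, neg_mul, Finset.sum_mul, ← Finset.sum_neg_distrib]
  refine Finset.sum_le_sum fun x _ => ?_
  rw [Finset.sum_mul, Finset.mul_sum, ← Finset.sum_neg_distrib]
  refine Finset.sum_le_sum fun y _ => ?_
  have h := neg_abs_le (A x y * (f x * f y))
  rw [abs_mul] at h
  nlinarith [abs_nonneg (A x y), abs_mul_le_sum_sq f x y]

omit [DecidableEq V] in
theorem lamMin_mul_sum_sq_le (A : Matrix V V ℝ) (f : V → ℝ) :
    lamMin A * ∑ x, f x ^ 2 ≤ ∑ x, f x * ∑ y, A x y * f y := by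
  rcases (Finset.sum_nonneg fun x _ => sq_nonneg (f x)).eq_or_lt with hf | hf
  · have hf0 : ∀ x, f x = 0 := fun x => pow_eq_zero_iff two_ne_zero |>.mp <|
      (Finset.sum_eq_zero_iff_of_nonneg fun x _ => sq_nonneg (f x)).mp hf.symm x (mem_univ x)
    simp [hf0]
  · rw [← le_div_iff₀ hf]
    exact csInf_le (bddBelow_rayleigh A) ⟨f, hf.ne', rfl⟩

namespace SimpleGraph

variable (G : SimpleGraph V) [DecidableRel G.Adj]

theorem lamMin_adjMatrix_le_neg_one {u v : V} (huv : G.Adj u v) :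
    lamMin (G.adjMatrix ℝ) ≤ -1 := by
  set f : V → ℝ := Pi.single u 1 - Pi.single v 1
  have hsq : ∑ x, f x ^ 2 = 2 := by
    rw [show ∑ x, f x ^ 2 = f ⬝ᵥ f by simp [dotProduct, sq]]
    norm_num [f, huv.ne, huv.ne.symm]
  have hq : ∑ x, f x * ∑ y, G.adjMatrix ℝ x y * f y = -2 := by
    change f ⬝ᵥ (G.adjMatrix ℝ *ᵥ f) = -2
    norm_num [f, mulVec_sub, huv, huv.symm]
  refine csInf_le (bddBelow_rayleigh _) ⟨f, by simp [hsq], ?_⟩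
  rw [hsq, hq]
  norm_num

variable (W : Finset V)

theorem lamMin_adjMatrix_mul_sum_sq_le (h : V → ℝ) :
    lamMin (G.adjMatrix ℝ) * ∑ v ∈ W, h v ^ 2 ≤
      ∑ v ∈ W, h v * ∑ u ∈ W.filter (G.Adj v), h u := by
  have := lamMin_mul_sum_sq_le (G.adjMatrix ℝ) (fun x => if x ∈ W then h x else 0)
  simpa [ite_pow, Finset.sum_ite_mem, adjMatrix_apply, ite_mul, Finset.sum_ite,
    Finset.filter_filter, and_comm] using this

omit [Fintype V] [DecidableEq V] in
theorem sum_sum_filter_adj (φ : V → ℝ) :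
    ∑ v ∈ W, ∑ u ∈ W.filter (G.Adj v), φ u =
      ∑ v ∈ W, #(W.filter (G.Adj v)) * φ v := by
  simp only [Finset.sum_filter]
  rw [Finset.sum_comm]
  refine Finset.sum_congr rfl fun v _ => ?_
  simp [← Finset.sum_filter, G.adj_comm]

omit [Fintype V] [DecidableEq V] in
theorem sum_sub_mul_sum_filter_adj_sub (f : V → ℝ) (a : ℝ) :
    ∑ v ∈ W, (f v - a) * ∑ u ∈ W.filter (G.Adj v), (f u - a) =
      ∑ v ∈ W, f v * ∑ u ∈ W.filter (G.Adj v), f u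
        - 2 * a * ∑ v ∈ W, #(W.filter (G.Adj v)) * f v
        + a ^ 2 * ∑ v ∈ W, (#(W.filter (G.Adj v)) : ℝ) := by
  have hinner : ∀ v, ∑ u ∈ W.filter (G.Adj v), (f u - a) =
      ∑ u ∈ W.filter (G.Adj v), f u - a * #(W.filter (G.Adj v)) := fun v => by
    rw [Finset.sum_sub_distrib, Finset.sum_const, nsmul_eq_mul, mul_comm]
  simp only [hinner]
  calc _ = ∑ v ∈ W, (f v * ∑ u ∈ W.filter (G.Adj v), f u
        - a * (#(W.filter (G.Adj v)) * f v) - a * ∑ u ∈ W.filter (G.Adj v), f u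
        + a ^ 2 * #(W.filter (G.Adj v))) := Finset.sum_congr rfl fun v _ => by ring
    _ = _ := by
      simp only [Finset.sum_add_distrib, Finset.sum_sub_distrib, ← Finset.mul_sum,
        G.sum_sum_filter_adj]
      ring

omit [Fintype V] in
theorem sum_filter_not_adj {v : V} (hv : v ∈ W) (φ : V → ℝ) :
    ∑ u ∈ W.filter (fun u => u ≠ v ∧ ¬ G.Adj v u), φ u =
      ∑ u ∈ W, φ u - φ v - ∑ u ∈ W.filter (G.Adj v), φ u := by
  have herase : (W.filter (fun u => ¬ G.Adj v u)).erase v =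
      W.filter (fun u => u ≠ v ∧ ¬ G.Adj v u) := by
    ext u
    simp [and_left_comm]
  rw [← Finset.sum_filter_add_sum_filter_not W (G.Adj v) φ,
    ← Finset.add_sum_erase (W.filter fun u => ¬ G.Adj v u) φ
      (Finset.mem_filter.2 ⟨hv, G.irrefl⟩), herase]
  ring

omit [Fintype V] in
theorem card_filter_not_adj {v : V} (hv : v ∈ W) :
    (#(W.filter (fun u => u ≠ v ∧ ¬ G.Adj v u)) : ℝ) = #W - 1 - #(W.filter (G.Adj v)) := by
  rw [Finset.cast_card, Finset.cast_card, Finset.cast_card]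
  exact G.sum_filter_not_adj W hv 1

omit [DecidableEq V] in
theorem card_filter_adj_le_maxDegree (v : V) : #(W.filter (G.Adj v)) ≤ G.maxDegree :=
  calc #(W.filter (G.Adj v)) ≤ #(G.neighborFinset v) :=
        Finset.card_le_card fun u hu => by simpa using (Finset.mem_filter.1 hu).2
    _ ≤ G.maxDegree := (G.card_neighborFinset_eq_degree v).trans_le (G.degree_le_maxDegree v)

theorem sq_sum_le_of_sum_card_filter_adj_mul_eq (hlam : lamMin (G.adjMatrix ℝ) ≤ -1)
    (hW : (G.maxDegree : ℝ) + 1 ≤ #W) (f : V → ℝ)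
    (hP : ∑ v ∈ W, #(W.filter (G.Adj v)) * f v = (#W - 1) * ∑ v ∈ W, f v) :
    (∑ v ∈ W, f v) ^ 2 ≤
      ∑ v ∈ W, f v * ∑ u ∈ W.filter (G.Adj v), f u
        - lamMin (G.adjMatrix ℝ) * ∑ v ∈ W, f v ^ 2 := by
  set μ := lamMin (G.adjMatrix ℝ)
  set T := ∑ v ∈ W, f v
  set M : ℝ := #W - 1 - μ
  have hM : 0 < M := by
    have := G.maxDegree.cast_nonneg (α := ℝ)
    linarith
  set a := T / M
  have haM : T = a * M := (div_mul_cancel₀ T hM.ne').symm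
  have h := G.lamMin_adjMatrix_mul_sum_sq_le W (fun v => f v - a)
  have hsq : ∑ v ∈ W, (f v - a) ^ 2 = ∑ v ∈ W, f v ^ 2 - 2 * a * T + a ^ 2 * #W := by
    simp only [sub_sq, Finset.sum_add_distrib, Finset.sum_sub_distrib, Finset.sum_const,
      nsmul_eq_mul, ← Finset.mul_sum, ← Finset.sum_mul]
    ring
  rw [G.sum_sub_mul_sum_filter_adj_sub, hP, hsq] at h
  have hdeg : ∑ v ∈ W, (#(W.filter (G.Adj v)) : ℝ) ≤ #W * G.maxDegree := by
    rw [← nsmul_eq_mul, ← Finset.sum_const]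
    exact Finset.sum_le_sum fun v _ => by exact_mod_cast G.card_filter_adj_le_maxDegree W v
  have hb : ∑ v ∈ W, (#(W.filter (G.Adj v)) : ℝ) - μ * #W ≤ M ^ 2 := by nlinarith
  -- since `a M = T`, the terms of `h` linear in `a` contribute `2 T²`, and `hb` bounds the rest
  nlinarith [mul_le_mul_of_nonneg_left hb (sq_nonneg a)]

theorem sum_mul_sum_filter_not_adj_le (hlam : lamMin (G.adjMatrix ℝ) ≤ -1)
    (hW : (G.maxDegree : ℝ) + 1 ≤ #W) (f : V → ℝ)
    (horth : ∑ v ∈ W, (#(W.filter (fun u => u ≠ v ∧ ¬ G.Adj v u)) : ℝ) * f v = 0) :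
    ∑ v ∈ W, f v * ∑ u ∈ W.filter (fun u => u ≠ v ∧ ¬ G.Adj v u), f u ≤
      (-lamMin (G.adjMatrix ℝ) - 1) * ∑ v ∈ W, f v ^ 2 := by
  rw [Finset.sum_congr rfl fun v hv => by rw [G.card_filter_not_adj W hv]] at horth
  rw [Finset.sum_congr rfl fun v hv => by rw [G.sum_filter_not_adj W hv]]
  have hP : ∑ v ∈ W, #(W.filter (G.Adj v)) * f v = (#W - 1) * ∑ v ∈ W, f v := by
    simp only [sub_mul, Finset.sum_sub_distrib, ← Finset.mul_sum] at horth
    linarith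
  have := G.sq_sum_le_of_sum_card_filter_adj_mul_eq W hlam hW f hP
  simp only [mul_sub, Finset.sum_sub_distrib, ← Finset.sum_mul, ← sq]
  linarith

theorem sub_mul_sum_sq_le_sum_card_filter_not_adj_mul_sq (f : V → ℝ) :
    (#W - 1 - G.maxDegree : ℝ) * ∑ v ∈ W, f v ^ 2 ≤
      ∑ v ∈ W, (#(W.filter (fun u => u ≠ v ∧ ¬ G.Adj v u)) : ℝ) * f v ^ 2 := by
  rw [Finset.mul_sum]
  refine Finset.sum_le_sum fun v hv => ?_
  rw [G.card_filter_not_adj W hv]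
  gcongr
  exact_mod_cast G.card_filter_adj_le_maxDegree W v

end SimpleGraph

theorem hsLam2_le_of_le_card {G : SimpleGraph V} [DecidableRel G.Adj] (S : Finset V) {c : ℝ}
    (hc : 0 < c) (hlam : lamMin (G.adjMatrix ℝ) ≤ -1)
    (hW : c * (-lamMin (G.adjMatrix ℝ) - 1) + G.maxDegree + 1 ≤ #(hsVerts G S)) :
    hsLam2 G S ≤ 1 / c := by
  have hc' : 0 ≤ c * (-lamMin (G.adjMatrix ℝ) - 1) := mul_nonneg hc.le (by linarith)
  refine Real.sSup_le ?_ (by positivity)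
  rintro r ⟨f, horth, hden, rfl⟩
  have hnum : ∑ v ∈ hsVerts G S, f v * ∑ u ∈ hsNbrs G S v, f u ≤
      (-lamMin (G.adjMatrix ℝ) - 1) * ∑ v ∈ hsVerts G S, f v ^ 2 :=
    G.sum_mul_sum_filter_not_adj_le (hsVerts G S) hlam (by linarith) f horth
  have hden_ge : (#(hsVerts G S) - 1 - G.maxDegree : ℝ) * ∑ v ∈ hsVerts G S, f v ^ 2 ≤
      ∑ v ∈ hsVerts G S, (#(hsNbrs G S v) : ℝ) * f v ^ 2 :=
    G.sub_mul_sum_sq_le_sum_card_filter_not_adj_mul_sq (hsVerts G S) f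
  have hden_pos : 0 < ∑ v ∈ hsVerts G S, (#(hsNbrs G S v) : ℝ) * f v ^ 2 :=
    (Finset.sum_nonneg fun v _ => by positivity).lt_of_ne' hden
  have hF : 0 ≤ ∑ v ∈ hsVerts G S, f v ^ 2 := Finset.sum_nonneg fun v _ => sq_nonneg (f v)
  rw [div_le_div_iff₀ hden_pos hc]
  nlinarith [mul_le_mul_of_nonneg_right hW hF]

theorem card_closedNbhd_le (G : SimpleGraph V) [DecidableRel G.Adj] (S : Finset V) :
    #(closedNbhd G S) ≤ #S * (G.maxDegree + 1) := by
  calc #(closedNbhd G S) ≤ #(S.biUnion fun u => insert u (G.neighborFinset u)) := by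
        refine Finset.card_le_card fun v hv => ?_
        simp only [closedNbhd, Finset.mem_union, Finset.mem_filter, Finset.mem_univ,
          true_and] at hv
        simp only [Finset.mem_biUnion, Finset.mem_insert, SimpleGraph.mem_neighborFinset]
        rcases hv with hv | ⟨u, hu, huv⟩
        · exact ⟨v, hv, .inl rfl⟩
        · exact ⟨u, hu, .inr huv⟩
    _ ≤ ∑ u ∈ S, #(insert u (G.neighborFinset u)) := Finset.card_biUnion_le
    _ ≤ ∑ _u ∈ S, (G.maxDegree + 1) := Finset.sum_le_sum fun u _ =>
        (Finset.card_insert_le _ _).trans <| Nat.succ_le_succ <|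
          (G.card_neighborFinset_eq_degree u).trans_le (G.degree_le_maxDegree u)
    _ = #S * (G.maxDegree + 1) := by rw [Finset.sum_const, smul_eq_mul]

theorem card_hsVerts_add_card_closedNbhd (G : SimpleGraph V) [DecidableRel G.Adj]
    (S : Finset V) : #(hsVerts G S) + #(closedNbhd G S) = Fintype.card V := by
  rw [hsVerts, ← Finset.compl_eq_univ_sdiff]
  exact Finset.card_compl_add_card _

theorem hsLam2_le_general (G : SimpleGraph V) [DecidableRel G.Adj]
    (hE : ∃ u v, G.Adj u v) (k : ℕ) (hk : 2 ≤ k)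
    (hkn : (k : ℝ) ≤ (Fintype.card V : ℝ) /
      ((G.maxDegree : ℝ) + |lamMin (G.adjMatrix ℝ)|))
    (S : Finset V) (hcard : S.card = k - 2) :
    hsLam2 G S ≤ 1 / (k : ℝ) := by
  obtain ⟨u, v, huv⟩ := hE
  have hlam := G.lamMin_adjMatrix_le_neg_one huv
  have hk' : (2 : ℝ) ≤ k := by exact_mod_cast hk
  have hn : (k : ℝ) * (G.maxDegree - lamMin (G.adjMatrix ℝ)) ≤ (Fintype.card V : ℝ) := by
    rwa [abs_of_neg (by linarith), ← sub_eq_add_neg,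
      le_div_iff₀ (by linarith [G.maxDegree.cast_nonneg (α := ℝ)])] at hkn
  have hN : (#(closedNbhd G S) : ℝ) ≤ ((k : ℝ) - 2) * (G.maxDegree + 1) := by
    have h : (#(closedNbhd G S) : ℝ) ≤ ((k - 2 : ℕ) : ℝ) * (G.maxDegree + 1) := by
      exact_mod_cast hcard ▸ card_closedNbhd_le G S
    rwa [Nat.cast_sub hk, Nat.cast_ofNat] at h
  have hW : (#(hsVerts G S) + #(closedNbhd G S) : ℝ) = Fintype.card V := by
    exact_mod_cast card_hsVerts_add_card_closedNbhd G S
  exact hsLam2_le_of_le_card S (by positivity) hlam (by nlinarith)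

/-- **Lemma (top links).** Let `G` be a finite simple graph with `n` vertices and
maximum degree `Δ`, having at least one edge, and let `k ≥ 2` be an integer with
`k ≤ n / (Δ + |λ_min(A_G)|)`.  Then for every independent set `S` of `G` with
`|S| = k - 2`, the random walk matrix of the graph `H_S` satisfies `λ₂ ≤ 1/k`. -/
theorem hsLam2_le (G : SimpleGraph V) [DecidableRel G.Adj]
    (hE : ∃ u v, G.Adj u v) (k : ℕ) (hk : 2 ≤ k)
    (hkn : (k : ℝ) ≤ (Fintype.card V : ℝ) /
      ((G.maxDegree : ℝ) + |lamMin (G.adjMatrix ℝ)|))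
    (S : Finset V) (hS : ∀ u ∈ S, ∀ v ∈ S, ¬ G.Adj u v) (hcard : S.card = k - 2) :
    hsLam2 G S ≤ 1 / (k : ℝ) :=
  hsLam2_le_general G hE k hk hkn S hcard
end

section
/- Let M₁ = (E, I₁) and M₂ = (E, I₂) be two matroids with a common independent set of size r. Then every common independent set S with |S| < r/2 is properly contained in a larger common independent set; consequently, if k ≤ r/2, then every common independent set of size at most k is contained in a common independent set of size exactly k. -/
open Finset

/-- A matroid on a finite ground set `E`, given by its (finite, nonempty, downward
closed) family of independent sets, satisfying the exchange property. -/
structure FinMatroid (E : Type*) [Fintype E] [DecidableEq E] where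
  ind : Finset (Finset E)
  empty_mem : ∅ ∈ ind
  subset_mem : ∀ S ∈ ind, ∀ T ⊆ S, T ∈ ind
  exchange : ∀ S ∈ ind, ∀ T ∈ ind, T.card < S.card →
    ∃ x ∈ S, x ∉ T ∧ insert x T ∈ ind

variable {E : Type*} [Fintype E] [DecidableEq E]

/-- `M` is the partition matroid with blocks the fibres of `b` and capacities `cap`:
a set is independent iff it meets the block `b⁻¹(i)` in at most `cap i` elements. -/
def IsPartitionWith (M : FinMatroid E) (b : E → ℕ) (cap : ℕ → ℕ) : Prop :=
  ∀ S : Finset E, S ∈ M.ind ↔ ∀ i : ℕ, (S.filter (fun x => b x = i)).card ≤ cap i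

/-- The common independent sets of `M₁` and `M₂` of size `k`. -/
def commonK (M₁ M₂ : FinMatroid E) (k : ℕ) : Finset (Finset E) :=
  (M₁.ind ∩ M₂.ind).filter (fun S => S.card = k)

/-- Augmentation: a smaller independent set can be grown inside `S ∪ T` to the size
of `T`. -/
lemma FinMatroid.aug (M : FinMatroid E) :
    ∀ n : ℕ, ∀ S ∈ M.ind, ∀ T ∈ M.ind, T.card - S.card = n → S.card ≤ T.card →
      ∃ S' ∈ M.ind, S ⊆ S' ∧ S' ⊆ S ∪ T ∧ S'.card = T.card := by
  intro n
  induction n with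
  | zero =>
    intro S hS T hT h hle
    exact ⟨S, hS, subset_rfl, subset_union_left, by omega⟩
  | succ n ih =>
    intro S hS T hT h hle
    have hlt : S.card < T.card := by omega
    obtain ⟨x, hxT, hxS, hins⟩ := M.exchange T hT S hS hlt
    have hcard : (insert x S).card = S.card + 1 := Finset.card_insert_of_notMem hxS
    obtain ⟨S', hS', hsub, hsub2, hc⟩ := ih (insert x S) hins T hT (by omega) (by omega)
    refine ⟨S', hS', fun y hy => hsub (Finset.mem_insert_of_mem hy), ?_, hc⟩
    intro y hy
    rcases Finset.mem_union.mp (hsub2 hy) with h1 | h1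
    · rcases Finset.mem_insert.mp h1 with rfl | h2
      · exact Finset.mem_union_right _ hxT
      · exact Finset.mem_union_left _ h2
    · exact Finset.mem_union_right _ h1

lemma FinMatroid.addable_card (M : FinMatroid E) (S T : Finset E)
    (hS : S ∈ M.ind) (hT : T ∈ M.ind) (hle : S.card ≤ T.card) :
    T.card - S.card ≤ ((T \ S).filter (fun x => insert x S ∈ M.ind)).card := by
  obtain ⟨S', hS', hsub, hsub2, hc⟩ := M.aug (T.card - S.card) S hS T hT rfl hle
  have hkey : S' \ S ⊆ (T \ S).filter (fun x => insert x S ∈ M.ind) := by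
    intro x hx
    rw [Finset.mem_sdiff] at hx
    rcases Finset.mem_union.mp (hsub2 hx.1) with h1 | h1
    · exact absurd h1 hx.2
    · refine Finset.mem_filter.mpr ⟨Finset.mem_sdiff.mpr ⟨h1, hx.2⟩, ?_⟩
      exact M.subset_mem S' hS' _ (Finset.insert_subset hx.1 hsub)
  have := Finset.card_le_card hkey
  have hcd : (S' \ S).card = S'.card - S.card := Finset.card_sdiff_of_subset hsub
  have := Finset.card_le_card hsub
  omega

/-- **Claim (purity of the matroid intersection complex).** Let `M₁`, `M₂` be two
matroids with a common independent set of size `r`.  Then every common independent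
set `S` with `|S| < r/2` is properly contained in a larger common independent set;
consequently, if `k ≤ r/2`, then every common independent set of size at most `k`
is contained in a common independent set of size exactly `k`. -/
theorem common_independent_extends (M₁ M₂ : FinMatroid E) (r : ℕ)
    (hr : ∃ T ∈ M₁.ind ∩ M₂.ind, T.card = r) :
    (∀ S ∈ M₁.ind ∩ M₂.ind, 2 * S.card < r →
      ∃ x ∉ S, insert x S ∈ M₁.ind ∩ M₂.ind) ∧
    (∀ k : ℕ, 2 * k ≤ r → ∀ S ∈ M₁.ind ∩ M₂.ind, S.card ≤ k →
      ∃ S' ∈ M₁.ind ∩ M₂.ind, S ⊆ S' ∧ S'.card = k) := by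
  obtain ⟨T, hT, hTc⟩ := hr
  rw [Finset.mem_inter] at hT
  have step : ∀ S ∈ M₁.ind ∩ M₂.ind, 2 * S.card < r →
      ∃ x ∉ S, insert x S ∈ M₁.ind ∩ M₂.ind := by
    intro S hS h2
    rw [Finset.mem_inter] at hS
    have hle : S.card ≤ T.card := by omega
    set A₁ := (T \ S).filter (fun x => insert x S ∈ M₁.ind) with hA₁
    set A₂ := (T \ S).filter (fun x => insert x S ∈ M₂.ind) with hA₂
    have h1 := M₁.addable_card S T hS.1 hT.1 hle
    have h2' := M₂.addable_card S T hS.2 hT.2 hle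
    rw [← hA₁] at h1
    rw [← hA₂] at h2'
    have hU : (A₁ ∪ A₂).card ≤ T.card := by
      apply Finset.card_le_card
      intro x hx
      rcases Finset.mem_union.mp hx with h | h <;>
        exact (Finset.mem_sdiff.mp (Finset.mem_filter.mp h).1).1
    have hIE : (A₁ ∪ A₂).card + (A₁ ∩ A₂).card = A₁.card + A₂.card :=
      Finset.card_union_add_card_inter A₁ A₂
    have hpos : 0 < (A₁ ∩ A₂).card := by omega
    obtain ⟨x, hx⟩ := Finset.card_pos.mp hpos
    rw [Finset.mem_inter] at hx
    have hx1 := Finset.mem_filter.mp hx.1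
    have hx2 := Finset.mem_filter.mp hx.2
    exact ⟨x, (Finset.mem_sdiff.mp hx1.1).2,
      Finset.mem_inter.mpr ⟨hx1.2, hx2.2⟩⟩
  refine ⟨step, ?_⟩
  intro k hk
  have main : ∀ d : ℕ, ∀ S ∈ M₁.ind ∩ M₂.ind, k - S.card = d → S.card ≤ k →
      ∃ S' ∈ M₁.ind ∩ M₂.ind, S ⊆ S' ∧ S'.card = k := by
    intro d
    induction d with
    | zero =>
      intro S hS hd hle
      exact ⟨S, hS, subset_rfl, by omega⟩
    | succ d ih =>
      intro S hS hd hle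
      obtain ⟨x, hxS, hins⟩ := step S hS (by omega)
      have hc : (insert x S).card = S.card + 1 := Finset.card_insert_of_notMem hxS
      obtain ⟨S', hS', hsub, hc'⟩ := ih (insert x S) hins (by omega) (by omega)
      exact ⟨S', hS', fun y hy => hsub (Finset.mem_insert_of_mem hy), hc'⟩
  intro S hS hle
  exact main (k - S.card) S hS rfl hle
end

section
/- Let M₁ = (E, I₁) and M₂ = (E, I₂) be two matroids with a common independent set of size r, and let k be an integer with k < r/2 − 1. For every common independent set S with |S| ≤ k − 2, any two distinct vertices of the graph H_S are joined in H_S by a path of length at most two; in particular, H_S is connected. -/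
open Finset

variable {E : Type*} [Fintype E] [DecidableEq E]

/-- Any independent set can be extended, using elements of an independent set `T`,
to an independent set of size `|T|`. -/
lemma FinMatroid.extend (M : FinMatroid E) (T : Finset E) (hT : T ∈ M.ind) :
    ∀ n : ℕ, ∀ A ∈ M.ind, A.card + n = T.card →
      ∃ A' ∈ M.ind, A ⊆ A' ∧ A' ⊆ A ∪ T ∧ A'.card = T.card := by
  intro n
  induction n with
  | zero => exact fun A hA h => ⟨A, hA, subset_rfl, subset_union_left, by omega⟩
  | succ n ih =>
    intro A hA h
    obtain ⟨z, hzT, hzA, hins⟩ := M.exchange T hT A hA (by omega)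
    obtain ⟨A', hA', hsub, hsub2, hcard⟩ := ih (insert z A) hins
      (by rw [card_insert_of_notMem hzA]; omega)
    refine ⟨A', hA', (subset_insert z A).trans hsub, hsub2.trans ?_, hcard⟩
    intro w hw
    rcases mem_union.1 hw with hw | hw
    · rcases mem_insert.1 hw with rfl | hw
      · exact mem_union_right _ hzT
      · exact mem_union_left _ hw
    · exact mem_union_right _ hw

/-- Counting lemma: at least `|T| - |A|` elements of `T` properly extend `A`. -/
lemma good_card (M : FinMatroid E) (T : Finset E) (hT : T ∈ M.ind)
    (A : Finset E) (hA : A ∈ M.ind) :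
    T.card ≤ (T.filter (fun z => z ∉ A ∧ insert z A ∈ M.ind)).card + A.card := by
  by_cases h : A.card ≤ T.card
  · obtain ⟨A', hA', hsub, hsub2, hcard⟩ := M.extend T hT (T.card - A.card) A hA (by omega)
    have hdiff : A' \ A ⊆ T.filter (fun z => z ∉ A ∧ insert z A ∈ M.ind) := by
      intro z hz
      rw [mem_sdiff] at hz
      have hzT : z ∈ T := by
        rcases mem_union.1 (hsub2 hz.1) with h' | h'
        · exact absurd h' hz.2
        · exact h'
      exact mem_filter.2 ⟨hzT, hz.2, M.subset_mem A' hA' _ (insert_subset hz.1 hsub)⟩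
    have h1 : (A' \ A).card = T.card - A.card := by
      rw [card_sdiff_of_subset hsub, hcard]
    have h2 := card_le_card hdiff
    omega
  · omega

/-- Transfer lemma: if `S+x` and `S+y` are independent but `S+x+y` is not, then any
`w` extending `S+x` also extends `S+y`. -/
lemma transfer (M : FinMatroid E) (S : Finset E) (x y w : E)
    (hxS : x ∉ S) (hyS : y ∉ S) (hwS : w ∉ S) (hwx : w ≠ x) (hwy : w ≠ y)
    (hySi : insert y S ∈ M.ind)
    (hxyS : insert x (insert y S) ∉ M.ind)
    (hxw : insert w (insert x S) ∈ M.ind) :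
    insert w (insert y S) ∈ M.ind := by
  have hwxS : w ∉ insert x S := by simp [hwx, hwS]
  have hcard : (insert y S).card < (insert w (insert x S)).card := by
    rw [card_insert_of_notMem hwxS, card_insert_of_notMem hxS,
      card_insert_of_notMem hyS]
    omega
  obtain ⟨z, hzA, hzB, hins⟩ := M.exchange _ hxw _ hySi hcard
  have hzS : z ∉ S := fun h => hzB (mem_insert_of_mem h)
  have hzy : z ≠ y := fun h => hzB (h ▸ mem_insert_self y S)
  rcases mem_insert.1 hzA with rfl | hz
  · exact hins
  · rcases mem_insert.1 hz with rfl | hz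
    · exact absurd hins hxyS
    · exact absurd hz hzS

/-- Key lemma: if `S+x+y` is dependent in `M₂`, and there is a common independent
set `T` of size at least `2|S|+4`, there is a common neighbour `w`. -/
lemma key (M₁ M₂ : FinMatroid E) (T : Finset E) (hT1 : T ∈ M₁.ind) (hT2 : T ∈ M₂.ind)
    (S : Finset E) (x y : E)
    (hxS : x ∉ S) (hyS : y ∉ S) (hxy : x ≠ y)
    (hx1 : insert x S ∈ M₁.ind) (hx2 : insert x S ∈ M₂.ind)
    (hy1 : insert y S ∈ M₁.ind) (hy2 : insert y S ∈ M₂.ind)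
    (hnot2 : insert x (insert y S) ∉ M₂.ind)
    (hbig : 2 * S.card + 4 ≤ T.card) :
    ∃ w, w ∉ S ∧ w ≠ x ∧ w ≠ y ∧
      insert w (insert x S) ∈ M₁.ind ∧ insert w (insert y S) ∈ M₁.ind ∧
      insert w (insert x S) ∈ M₂.ind ∧ insert w (insert y S) ∈ M₂.ind := by
  have hyxS : x ∉ insert y S := by simp [hxy, hxS]
  have hcxS : (insert x S).card = S.card + 1 := card_insert_of_notMem hxS
  have hcyS : (insert y S).card = S.card + 1 := card_insert_of_notMem hyS
  set G₂ : Finset E :=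
    T.filter (fun z => z ∉ insert x S ∧ insert z (insert x S) ∈ M₂.ind) with hG₂
  have hG₂card : T.card ≤ G₂.card + (S.card + 1) := by
    have h := good_card M₂ T hT2 (insert x S) hx2
    rw [← hG₂] at h
    omega
  by_cases h1 : insert x (insert y S) ∈ M₁.ind
  · -- `S+x+y` independent in M₁: pick `w` extending `S+x+y` in M₁ and `S+x` in M₂
    set D : Finset E := insert x (insert y S) with hD
    have hDcard : D.card = S.card + 2 := by
      rw [hD, card_insert_of_notMem hyxS, hcyS]
    set G₁ : Finset E := T.filter (fun z => z ∉ D ∧ insert z D ∈ M₁.ind) with hG₁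
    have hG₁card : T.card ≤ G₁.card + (S.card + 2) := by
      have h := good_card M₁ T hT1 D h1
      rw [← hG₁] at h
      omega
    have hunion : (G₁ ∪ G₂).card ≤ T.card :=
      card_le_card (union_subset (filter_subset _ _) (filter_subset _ _))
    have hinter : 0 < (G₁ ∩ G₂).card := by
      have := card_union_add_card_inter G₁ G₂
      omega
    obtain ⟨w, hw⟩ := card_pos.1 hinter
    rw [mem_inter] at hw
    obtain ⟨hw1, hw2⟩ := hw
    obtain ⟨-, hwD, hwind1⟩ := mem_filter.1 hw1
    obtain ⟨-, hwxS, hwind2⟩ := mem_filter.1 hw2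
    have hwS : w ∉ S := fun h => hwD (by simp [hD, h])
    have hwx : w ≠ x := fun h => hwD (by simp [hD, h])
    have hwy : w ≠ y := fun h => hwD (by simp [hD, h])
    refine ⟨w, hwS, hwx, hwy, ?_, ?_, hwind2, ?_⟩
    · exact M₁.subset_mem _ hwind1 _
        (insert_subset_insert w (insert_subset_insert x (subset_insert y S)))
    · exact M₁.subset_mem _ hwind1 _ (insert_subset_insert w (subset_insert x _))
    · exact transfer M₂ S x y w hxS hyS hwS hwx hwy hy2 hnot2 hwind2
  · -- `S+x+y` dependent in both matroids: pick `w` extending `S+x` in both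
    set G₁ : Finset E :=
      T.filter (fun z => z ∉ insert x S ∧ insert z (insert x S) ∈ M₁.ind) with hG₁
    have hG₁card : T.card ≤ G₁.card + (S.card + 1) := by
      have h := good_card M₁ T hT1 (insert x S) hx1
      rw [← hG₁] at h
      omega
    have hunion : (G₁ ∪ G₂).card ≤ T.card :=
      card_le_card (union_subset (filter_subset _ _) (filter_subset _ _))
    have hinter : 0 < (G₁ ∩ G₂).card := by
      have := card_union_add_card_inter G₁ G₂
      omega
    obtain ⟨w, hw⟩ := card_pos.1 hinter
    rw [mem_inter] at hw
    obtain ⟨hw1, hw2⟩ := hw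
    obtain ⟨-, hwxS, hwind1⟩ := mem_filter.1 hw1
    obtain ⟨-, -, hwind2⟩ := mem_filter.1 hw2
    have hwS : w ∉ S := fun h => hwxS (mem_insert_of_mem h)
    have hwx : w ≠ x := fun h => hwxS (h ▸ mem_insert_self x S)
    have hwy : w ≠ y := by
      rintro rfl
      exact h1 (by rwa [Finset.insert_comm] at hwind1)
    exact ⟨w, hwS, hwx, hwy, hwind1,
      transfer M₁ S x y w hxS hyS hwS hwx hwy hy1 h1 hwind1, hwind2,
      transfer M₂ S x y w hxS hyS hwS hwx hwy hy2 hnot2 hwind2⟩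

/-- **Lemma (connectivity of the links of the matroid intersection complex).**
Let `M₁`, `M₂` be two matroids with a common independent set of size `r`, and let
`k < r/2 - 1`.  For every common independent set `S` with `|S| ≤ k - 2`, any two
distinct vertices `x, y` of `H_S` (the graph on `{z ∈ E ∖ S : S ∪ {z} ∈ I₁ ∩ I₂}`
with `x ∼ y` iff `S ∪ {x, y} ∈ I₁ ∩ I₂`) are joined in `H_S` by a path of length at
most two: either they are adjacent in `H_S`, or they have a common `H_S`-neighbour.
In particular `H_S` is connected. -/
theorem mi_hs_path_length_two (M₁ M₂ : FinMatroid E) (r : ℕ)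
    (hr : ∃ T ∈ M₁.ind ∩ M₂.ind, T.card = r)
    (k : ℕ) (hk : (k : ℝ) < (r : ℝ) / 2 - 1)
    (S : Finset E) (hS : S ∈ M₁.ind ∩ M₂.ind) (hcard : S.card + 2 ≤ k)
    (x y : E) (hx : x ∉ S ∧ insert x S ∈ M₁.ind ∩ M₂.ind)
    (hy : y ∉ S ∧ insert y S ∈ M₁.ind ∩ M₂.ind) (hxy : x ≠ y) :
    insert x (insert y S) ∈ M₁.ind ∩ M₂.ind ∨
      ∃ w, w ∉ S ∧ insert w S ∈ M₁.ind ∩ M₂.ind ∧ w ≠ x ∧ w ≠ y ∧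
        insert w (insert x S) ∈ M₁.ind ∩ M₂.ind ∧
        insert w (insert y S) ∈ M₁.ind ∩ M₂.ind := by
  obtain ⟨T, hT, hTcard⟩ := hr
  rw [mem_inter] at hT
  obtain ⟨hT1, hT2⟩ := hT
  obtain ⟨hxS, hxI⟩ := hx
  obtain ⟨hyS, hyI⟩ := hy
  rw [mem_inter] at hxI hyI
  have hrk : 2 * k + 3 ≤ r := by
    have h2 : (2 * k + 2 : ℝ) < (r : ℝ) := by linarith
    have h3 : (2 * k + 2 : ℕ) < r := by exact_mod_cast h2
    omega
  have hbig : 2 * S.card + 4 ≤ T.card := by omega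
  by_cases h1 : insert x (insert y S) ∈ M₁.ind
  · by_cases h2 : insert x (insert y S) ∈ M₂.ind
    · exact Or.inl (mem_inter.2 ⟨h1, h2⟩)
    · obtain ⟨w, hwS, hwx, hwy, ha, hb, hc, hd⟩ :=
        key M₁ M₂ T hT1 hT2 S x y hxS hyS hxy hxI.1 hxI.2 hyI.1 hyI.2 h2 hbig
      refine Or.inr ⟨w, hwS, ?_, hwx, hwy, mem_inter.2 ⟨ha, hc⟩, mem_inter.2 ⟨hb, hd⟩⟩
      exact mem_inter.2 ⟨M₁.subset_mem _ ha _ (insert_subset_insert w (subset_insert x S)),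
        M₂.subset_mem _ hc _ (insert_subset_insert w (subset_insert x S))⟩
  · obtain ⟨w, hwS, hwx, hwy, ha, hb, hc, hd⟩ :=
      key M₂ M₁ T hT2 hT1 S x y hxS hyS hxy hxI.2 hxI.1 hyI.2 hyI.1 h1 hbig
    refine Or.inr ⟨w, hwS, ?_, hwx, hwy, mem_inter.2 ⟨hc, ha⟩, mem_inter.2 ⟨hd, hb⟩⟩
    exact mem_inter.2 ⟨M₁.subset_mem _ hc _ (insert_subset_insert w (subset_insert x S)),
      M₂.subset_mem _ ha _ (insert_subset_insert w (subset_insert x S))⟩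
end
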